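/- arXiv:1611.00652 — 5 statements merged into one kernel-verified Lean document; each statement's English description precedes it below -/
import Mathlib

section
/- Every infinite virtually cyclic group G contains a subgroup H of index at most 2 such that H admits a surjective homomorphism onto ℤ with finite kernel. -/
/-- A group is virtually cyclic if it has a cyclic subgroup of finite index. -/
def IsVirtuallyCyclic (G : Type*) [Group G] : Prop :=
  ∃ H : Subgroup G, IsCyclic ↥H ∧ H.FiniteIndex

section Aux

variable {G : Type*} [Group G]

/-- Injectivity of integer powers of an infinite-order element. -/
lemma aux_zpow_injective {g : G} (hg : orderOf g = 0) {a b : ℤ} (h : g ^ a = g ^ b) :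
    a = b := by
  have := orderOf_dvd_sub_iff_zpow_eq_zpow.mpr h
  rw [hg] at this
  exact sub_eq_zero.mp (by exact_mod_cast zero_dvd_iff.mp this)

lemma aux_pow_eq_one {g : G} (hg : orderOf g = 0) {n : ℕ} (h : g ^ n = 1) : n = 0 := by
  have := orderOf_dvd_of_pow_eq_one h
  rw [hg] at this
  exact zero_dvd_iff.mp this

lemma aux_conj_zpow (a g : G) (k : ℤ) : (a * g * a⁻¹) ^ k = a * g ^ k * a⁻¹ := by
  simp only [← MulAut.conj_apply, ← map_zpow]

/-- A generator of an infinite group has infinite order. -/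
lemma aux_orderOf_generator_eq_zero [Infinite G] {g : G}
    (hgen : ∀ x : G, x ∈ Subgroup.zpowers g) : orderOf g = 0 := by
  rw [orderOf_eq_zero_iff]
  intro hfin
  have hfin' : (Subgroup.zpowers g : Set G).Finite := hfin.finite_zpowers
  exact Set.infinite_univ (hfin'.subset (fun x _ => hgen x))

/-- An infinite cyclic group is isomorphic to `Multiplicative ℤ`. -/
lemma aux_equiv_int (C : Type*) [Group C] [IsCyclic C] [Infinite C] :
    Nonempty (C ≃* Multiplicative ℤ) := by
  obtain ⟨c, hc⟩ := IsCyclic.exists_generator (α := C)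
  have hco : orderOf c = 0 := aux_orderOf_generator_eq_zero hc
  have hbij : Function.Bijective (zpowersHom C c) := by
    constructor
    · intro a b hab
      have : c ^ a.toAdd = c ^ b.toAdd := hab
      exact aux_zpow_injective hco this
    · intro x
      obtain ⟨k, hk⟩ := Subgroup.mem_zpowers_iff.mp (hc x)
      exact ⟨Multiplicative.ofAdd k, hk⟩
  exact ⟨(MulEquiv.ofBijective _ hbij).symm⟩

/-- Key lemma: a group with a central element of infinite order generating a finite-index
subgroup admits a surjection onto `ℤ` with finite kernel. -/
lemma aux_key {K : Type*} [Group K] (g : K) (hg : orderOf g = 0)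
    (hgc : g ∈ Subgroup.center K) (hfi : (Subgroup.zpowers g).FiniteIndex) :
    ∃ f : K →* Multiplicative ℤ, Function.Surjective f ∧ Finite f.ker := by
  haveI := hfi
  have hle : Subgroup.zpowers g ≤ Subgroup.center K := Subgroup.zpowers_le.mpr hgc
  haveI : (Subgroup.center K).FiniteIndex := Subgroup.finiteIndex_of_le hle
  set C := Subgroup.center K
  let c : C := ⟨g, hgc⟩
  have hco : orderOf c = 0 := by rwa [Subgroup.orderOf_mk]
  -- zpowers c = (zpowers g).subgroupOf C
  have hZc : Subgroup.zpowers c = (Subgroup.zpowers g).subgroupOf C := by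
    ext x
    rw [Subgroup.mem_subgroupOf, Subgroup.mem_zpowers_iff, Subgroup.mem_zpowers_iff]
    constructor
    · rintro ⟨k, rfl⟩
      exact ⟨k, rfl⟩
    · rintro ⟨k, hk⟩
      exact ⟨k, Subtype.ext hk⟩
  haveI hZcfi : (Subgroup.zpowers c).FiniteIndex := by
    rw [hZc]
    constructor
    intro h0
    have hdvd := Subgroup.relIndex_dvd_index_of_le hle
    rw [Subgroup.relIndex] at hdvd
    rw [h0] at hdvd
    exact hfi.index_ne_zero (zero_dvd_iff.mp hdvd)
  set n := C.index with hn
  set m := (Subgroup.zpowers c).index with hm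
  have hn0 : n ≠ 0 := Subgroup.FiniteIndex.index_ne_zero
  have hm0 : m ≠ 0 := Subgroup.FiniteIndex.index_ne_zero
  let τ : K →* C := MonoidHom.transferCenterPow K
  -- the m-th power map of C lands in zpowers c
  let P : C →* ↥(Subgroup.zpowers c) :=
    letI : CommMonoid C := { (inferInstance : Monoid C) with mul_comm := fun a b => Subtype.ext (Subgroup.mem_center_iff.mp b.2 a) }; (powMonoidHom m).codRestrict (Subgroup.zpowers c)
      (fun z => (Subgroup.zpowers c).pow_index_mem z)
  -- zpowers c is infinite cyclic
  haveI : IsCyclic ↥(Subgroup.zpowers c) := by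
    refine ⟨⟨⟨c, Subgroup.mem_zpowers c⟩, ?_⟩⟩
    rintro ⟨x, hx⟩
    obtain ⟨k, hk⟩ := Subgroup.mem_zpowers_iff.mp hx
    exact Subgroup.mem_zpowers_iff.mpr ⟨k, Subtype.ext (by simpa using hk)⟩
  haveI : Infinite ↥(Subgroup.zpowers c) := by
    refine Infinite.of_injective (fun k : ℤ => ⟨c ^ k, Subgroup.zpow_mem _ (Subgroup.mem_zpowers c) k⟩) ?_
    intro a b hab
    exact aux_zpow_injective hco (by simpa using congrArg Subtype.val hab)
  obtain ⟨e₁⟩ := aux_equiv_int ↥(Subgroup.zpowers c)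
  let f₁ : K →* Multiplicative ℤ := e₁.toMonoidHom.comp (P.comp τ)
  -- coe of τ x
  have hτ : ∀ x : K, ((τ x : C) : K) = x ^ n := fun x => MonoidHom.transferCenterPow_apply x
  -- kernel characterization
  have hker : ∀ x : K, f₁ x = 1 ↔ x ^ (n * m) = 1 := by
    intro x
    have h1 : f₁ x = 1 ↔ P (τ x) = 1 := by
      rw [show f₁ x = e₁ (P (τ x)) from rfl]
      exact ⟨fun h => e₁.injective (h.trans (map_one e₁).symm),
        fun h => by rw [h, map_one]⟩
    rw [h1]
    have h2 : P (τ x) = 1 ↔ ((τ x : C)) ^ m = 1 := by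
      constructor
      · intro h
        have := congrArg Subtype.val h
        simpa [P, powMonoidHom] using this
      · intro h
        apply Subtype.ext
        simpa [P, powMonoidHom] using h
    rw [h2]
    constructor
    · intro h
      have := congrArg Subtype.val h
      simp only [SubmonoidClass.coe_pow, OneMemClass.coe_one] at this
      rw [hτ x, ← pow_mul] at this
      exact this
    · intro h
      apply Subtype.ext
      simp only [SubmonoidClass.coe_pow, OneMemClass.coe_one]
      rw [hτ x, ← pow_mul]
      exact h
  -- the kernel of f₁ is finite
  have hkerfin : Finite f₁.ker := by
    have hinj : Function.Injective
        (fun x : f₁.ker => ((x : K) : K ⧸ Subgroup.zpowers g)) := by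
      rintro ⟨x, hx⟩ ⟨y, hy⟩ hxy
      have hxk : x ^ (n * m) = 1 := (hker x).mp hx
      have hyk : y ^ (n * m) = 1 := (hker y).mp hy
      simp only at hxy
      rw [QuotientGroup.eq] at hxy
      obtain ⟨k, hk⟩ := Subgroup.mem_zpowers_iff.mp hxy
      have hy' : y = x * g ^ k := by
        rw [hk]; group
      have hcx : Commute x g := Subgroup.mem_center_iff.mp hgc x
      have hcomm : Commute x (g ^ k) := hcx.zpow_right k
      have : (x * g ^ k) ^ (n * m) = x ^ (n * m) * (g ^ k) ^ (n * m) :=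
        hcomm.mul_pow (n * m)
      rw [← hy', hyk, hxk, one_mul] at this
      have hgk : g ^ (k * (n * m : ℕ)) = 1 := by
        rw [zpow_mul, zpow_natCast]
        exact this.symm
      have : k * (n * m : ℕ) = 0 := by
        have := aux_zpow_injective hg (a := k * (n * m : ℕ)) (b := 0) (by simpa using hgk)
        exact this
      have hk0 : k = 0 := by
        rcases mul_eq_zero.mp this with h | h
        · exact h
        · exfalso; exact (Nat.mul_ne_zero hn0 hm0) (by exact_mod_cast h)
      apply Subtype.ext
      have hxy1 : x⁻¹ * y = 1 := by rw [← hk, hk0, zpow_zero]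
      exact inv_mul_eq_one.mp hxy1
    exact Finite.of_injective _ hinj
  -- f₁ is nontrivial
  have hfg : f₁ g ≠ 1 := by
    rw [Ne, hker g]
    intro h
    exact Nat.mul_ne_zero hn0 hm0 (aux_pow_eq_one hg h)
  -- the range of f₁ is infinite cyclic
  haveI : Infinite ↥f₁.range := by
    refine Infinite.of_injective
      (fun k : ℤ => (⟨f₁ g, ⟨g, rfl⟩⟩ : f₁.range) ^ k) ?_
    intro a b hab
    have h0 : orderOf (⟨f₁ g, ⟨g, rfl⟩⟩ : f₁.range) = 0 := by
      rw [← Subgroup.orderOf_coe]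
      simp only
      rw [orderOf_eq_zero_iff]
      intro hford
      obtain ⟨z, hz1, hz2⟩ := hford.exists_pow_eq_one
      apply hfg
      have : (f₁ g) ^ (z : ℤ) = 1 := by exact_mod_cast hz2
      have hz : (Multiplicative.toAdd (f₁ g)) * z = 0 := by
        have := congrArg Multiplicative.toAdd this
        simpa [toAdd_zpow, mul_comm] using this
      rcases mul_eq_zero.mp hz with h | h
      · have : f₁ g = Multiplicative.ofAdd 0 := by
          rw [← h]; rfl
        simpa using this
      · exact absurd (by exact_mod_cast h) hz1.ne'
    exact aux_zpow_injective h0 hab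
  obtain ⟨e₂⟩ := aux_equiv_int ↥f₁.range
  refine ⟨e₂.toMonoidHom.comp f₁.rangeRestrict, ?_, ?_⟩
  · exact e₂.surjective.comp f₁.rangeRestrict_surjective
  · have : (e₂.toMonoidHom.comp f₁.rangeRestrict).ker = f₁.ker := by
      ext x
      simp only [MonoidHom.mem_ker, MonoidHom.comp_apply]
      constructor
      · intro h
        have h1 : f₁.rangeRestrict x = 1 := e₂.injective (by simpa using h)
        have := congrArg Subtype.val h1
        simpa using this
      · intro h
        have h1 : f₁.rangeRestrict x = 1 := Subtype.ext (by simpa using h)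
        rw [h1, map_one]
    rw [this]
    exact hkerfin

end Aux

/-- Every infinite virtually cyclic group contains a subgroup of index at most 2
which surjects onto `ℤ` with finite kernel. -/
theorem exists_index_le_two_subgroup_surjecting_onto_int
    {G : Type*} [Group G] [Infinite G] (hvc : IsVirtuallyCyclic G) :
    ∃ H : Subgroup G, H.index ≤ 2 ∧
      ∃ f : ↥H →* Multiplicative ℤ, Function.Surjective f ∧ Finite f.ker := by
  classical
  obtain ⟨H, hHcyc, hHfi⟩ := hvc
  haveI := hHfi
  set N := H.normalCore with hN
  haveI : N.FiniteIndex := Subgroup.finiteIndex_normalCore H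
  haveI : N.Normal := H.normalCore_normal
  haveI := hHcyc
  haveI : IsCyclic ↥N := Subgroup.isCyclic_of_le H.normalCore_le
  haveI : Infinite ↥N := by
    by_contra hfin
    rw [not_infinite_iff_finite] at hfin
    haveI := hfin
    exact (inferInstance : Infinite G).not_finite
      (Finite.of_equiv _ (Subgroup.groupEquivQuotientProdSubgroup (s := N)).symm)
  obtain ⟨x, hx⟩ := IsCyclic.exists_generator (α := ↥N)
  set g : G := (x : G) with hgdef
  have hgN : Subgroup.zpowers g = N := by
    apply le_antisymm (Subgroup.zpowers_le.mpr x.2)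
    intro y hy
    obtain ⟨k, hk⟩ := Subgroup.mem_zpowers_iff.mp (hx ⟨y, hy⟩)
    exact Subgroup.mem_zpowers_iff.mpr ⟨k, by simpa using congrArg Subtype.val hk⟩
  have hg : orderOf g = 0 := by
    rw [hgdef, Subgroup.orderOf_coe]
    exact aux_orderOf_generator_eq_zero hx
  -- every conjugate of g is g^(±1)
  have hconj : ∀ a : G, ∃ k : ℤ, a * g * a⁻¹ = g ^ k := by
    intro a
    have : a * g * a⁻¹ ∈ N := (inferInstance : N.Normal).conj_mem g (hgN ▸ Subgroup.mem_zpowers g) a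
    rw [← hgN] at this
    obtain ⟨k, hk⟩ := Subgroup.mem_zpowers_iff.mp this
    exact ⟨k, hk.symm⟩
  have hpm : ∀ a : G, a * g * a⁻¹ = g ∨ a * g * a⁻¹ = g⁻¹ := by
    intro a
    obtain ⟨k, hk⟩ := hconj a
    obtain ⟨k', hk'⟩ := hconj a⁻¹
    have hgkk : g = g ^ (k' * k) := by
      have h1 : g = a⁻¹ * g ^ k * a⁻¹⁻¹ := by rw [← hk]; group
      rw [← aux_conj_zpow a⁻¹ g k, hk', ← zpow_mul] at h1
      exact h1
    have h1 : k' * k = 1 := (aux_zpow_injective hg (by rw [← hgkk, zpow_one])).symm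
    have hk1 : k = 1 ∨ k = -1 := Int.isUnit_iff.mp (IsUnit.of_mul_eq_one k' (by linarith [h1, mul_comm k k']))
    rcases hk1 with h | h
    · left; rw [hk, h, zpow_one]
    · right; rw [hk, h, zpow_neg_one]
  -- the sign homomorphism
  let εf : G → ℤˣ := fun a => if a * g * a⁻¹ = g then 1 else -1
  have hεconj : ∀ a : G, a * g * a⁻¹ = g ^ ((εf a : ℤ)) := by
    intro a
    by_cases h : a * g * a⁻¹ = g
    · simp [εf, h]
    · rcases hpm a with h' | h'
      · exact absurd h' h
      · have hne : g⁻¹ ≠ g := by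
          intro he
          have h2 : g ^ 2 = 1 := by
            rw [pow_two]
            nth_rewrite 1 [← he]
            exact inv_mul_cancel g
          simpa using aux_pow_eq_one hg h2
        simp [εf, h, h', hne]
  have hεmul : ∀ a b : G, εf (a * b) = εf a * εf b := by
    intro a b
    have h1 : (a * b) * g * (a * b)⁻¹ = g ^ (((εf a * εf b : ℤˣ) : ℤ)) := by
      have : (a * b) * g * (a * b)⁻¹ = a * (b * g * b⁻¹) * a⁻¹ := by group
      rw [this, hεconj b, ← aux_conj_zpow, hεconj a, ← zpow_mul, Units.val_mul, mul_comm]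
    have h2 := hεconj (a * b)
    exact Units.ext (aux_zpow_injective hg (h2.symm.trans h1))
  let ε : G →* ℤˣ :=
    { toFun := εf
      map_one' := by simp [εf]
      map_mul' := hεmul }
  refine ⟨ε.ker, ?_, ?_⟩
  · -- index at most 2
    rw [Subgroup.index_ker]
    calc Nat.card ε.range ≤ Nat.card ℤˣ :=
          Nat.card_le_card_of_injective (fun u => (u : ℤˣ)) Subtype.coe_injective
      _ = 2 := by rw [Nat.card_eq_fintype_card, Fintype.card_units_int]
  · -- the surjection onto ℤ
    have hcomm : ∀ a : G, a ∈ ε.ker → a * g = g * a := by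
      intro a ha
      have h1 : εf a = 1 := ha
      have := hεconj a
      rw [h1] at this
      simp only [Units.val_one, zpow_one] at this
      exact mul_inv_eq_iff_eq_mul.mp this
    have hgK : g ∈ ε.ker := by
      have : g * g * g⁻¹ = g := by group
      exact (if_pos this : εf g = 1)
    set K := ε.ker
    let g' : ↥K := ⟨g, hgK⟩
    have hg' : orderOf g' = 0 := by rwa [Subgroup.orderOf_mk]
    have hg'c : g' ∈ Subgroup.center ↥K := by
      rw [Subgroup.mem_center_iff]
      intro b
      exact Subtype.ext (hcomm b b.2)
    have hZfi : (Subgroup.zpowers g').FiniteIndex := by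
      have hZ : Subgroup.zpowers g' = N.subgroupOf K := by
        ext y
        rw [Subgroup.mem_subgroupOf, Subgroup.mem_zpowers_iff, ← hgN, Subgroup.mem_zpowers_iff]
        constructor
        · rintro ⟨k, rfl⟩
          exact ⟨k, by simp [g']⟩
        · rintro ⟨k, hk⟩
          exact ⟨k, Subtype.ext (by simpa using hk)⟩
      rw [hZ]
      constructor
      intro h0
      have hdvd := Subgroup.relIndex_dvd_index_of_normal (H := N) (K := K)
      rw [Subgroup.relIndex, h0] at hdvd
      exact (inferInstance : N.FiniteIndex).index_ne_zero (zero_dvd_iff.mp hdvd)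
    exact aux_key g' hg' hg'c hZfi
end

section
/- Let C be a connected graph with vertex set V and let Ĉ be the combinatorial horoball over C: the graph with vertex set V × ℕ (including 0), with an edge between (v,0) and (w,0) for each edge {v,w} of C, an edge between (v,k) and (w,k) for k ≥ 1 whenever 0 < d_C(v,w) ≤ 2^k, and an edge between (v,k) and (v,k+1) for all v and k. Then for any two vertices v, w of C, the distance in Ĉ between (v,0) and (w,0) is at most 2·⌈log₂(d_C(v,w))⌉ + 3. -/
/-- The combinatorial horoball over a graph `C`: vertices `V × ℕ`, level-0
horizontal edges are edges of `C`, at level `k ≥ 1` two distinct vertices are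
joined whenever their `C`-distance is at most `2 ^ k`, and vertical edges join
consecutive levels. -/
def horoball {V : Type*} (C : SimpleGraph V) : SimpleGraph (V × ℕ) where
  Adj x y :=
    (x.2 = 0 ∧ y.2 = 0 ∧ C.Adj x.1 y.1) ∨
    (x.2 = y.2 ∧ 1 ≤ x.2 ∧ x.1 ≠ y.1 ∧ C.dist x.1 y.1 ≤ 2 ^ x.2) ∨
    (x.1 = y.1 ∧ (y.2 = x.2 + 1 ∨ x.2 = y.2 + 1))
  symm := by
    constructor
    rintro ⟨a, k⟩ ⟨b, l⟩ (⟨h1, h2, h3⟩ | ⟨h1, h2, h3, h4⟩ | ⟨h1, h2⟩)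
    · exact Or.inl ⟨h2, h1, h3.symm⟩
    · refine Or.inr (Or.inl ?_)
      simp only at h1 h2 h3 h4 ⊢
      subst h1
      exact ⟨rfl, h2, h3.symm, by rwa [SimpleGraph.dist_comm]⟩
    · simp only at h1 h2 ⊢
      subst h1
      exact Or.inr (Or.inr ⟨rfl, h2.symm⟩)
  loopless := by
    constructor
    rintro ⟨a, k⟩ (⟨h1, h2, h3⟩ | ⟨h1, h2, h3, h4⟩ | ⟨h1, h2⟩)
    · exact C.irrefl h3
    · exact h3 rfl
    · simp only at h2; omega

/-- A vertical walk of length `k` from level 0 to level `k`. -/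
lemma horoball_up {V : Type*} (C : SimpleGraph V) (v : V) (k : ℕ) :
    ∃ p : (horoball C).Walk (v, 0) (v, k), p.length = k := by
  induction k with
  | zero => exact ⟨.nil, rfl⟩
  | succ k ih =>
    obtain ⟨p, hp⟩ := ih
    refine ⟨p.concat (show (horoball C).Adj (v, k) (v, k + 1) from Or.inr (Or.inr ⟨rfl, Or.inl rfl⟩)), ?_⟩
    simp [SimpleGraph.Walk.length_concat, hp]

/-- In the combinatorial horoball over a connected graph, the distance between two
level-0 vertices is at most `2⌈log₂ d_C(v,w)⌉ + 3`. -/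
theorem horoball_dist_le {V : Type*} (C : SimpleGraph V) (hC : C.Connected) (v w : V) :
    (horoball C).dist (v, 0) (w, 0) ≤ 2 * Nat.clog 2 (C.dist v w) + 3 := by
  by_cases hvw : v = w
  · subst hvw; rw [SimpleGraph.dist_self]; omega
  · have hd : 0 < C.dist v w := hC.pos_dist_of_ne hvw
    set k := Nat.clog 2 (C.dist v w) with hk
    by_cases hk0 : k = 0
    · -- then C.dist v w = 1, so adjacency at level 0
      have hle : C.dist v w ≤ 2 ^ k := Nat.le_pow_clog one_lt_two _
      rw [hk0, pow_zero] at hle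
      have hadj : C.Adj v w := SimpleGraph.dist_eq_one_iff_adj.mp (le_antisymm hle hd)
      have : (horoball C).Adj (v, 0) (w, 0) := Or.inl ⟨rfl, rfl, hadj⟩
      calc (horoball C).dist (v, 0) (w, 0) ≤ 1 := by
            rw [SimpleGraph.dist_eq_one_iff_adj.mpr this]
        _ ≤ 2 * k + 3 := by omega
    · have hk1 : 1 ≤ k := Nat.one_le_iff_ne_zero.mpr hk0
      have hle : C.dist v w ≤ 2 ^ k := Nat.le_pow_clog one_lt_two _
      obtain ⟨p, hp⟩ := horoball_up C v k
      obtain ⟨q, hq⟩ := horoball_up C w k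
      have hadj : (horoball C).Adj (v, k) (w, k) := Or.inr (Or.inl ⟨rfl, hk1, hvw, hle⟩)
      calc (horoball C).dist (v, 0) (w, 0)
            ≤ (p.append ((q.reverse).cons hadj)).length := SimpleGraph.dist_le _
        _ ≤ 2 * k + 3 := by
            simp only [SimpleGraph.Walk.length_append, SimpleGraph.Walk.length_cons,
              SimpleGraph.Walk.length_reverse, hp, hq]
            omega
end

section
/- Let X be a proper δ-hyperbolic geodesic space with Gromov boundary ∂X, and let γ be a bi-infinite (λ,ε)-quasi-geodesic with endpoints γ(±∞) ∈ ∂X. Fix r > D, where D = D(λ,ε,δ) is the Morse constant (the Hausdorff distance bound between γ and any geodesic with the same endpoints). For a connected component U of the set A = {x ∈ X : d(x, γ) ≥ r}, define its shadow 𝒮(U) ⊆ ∂X to be the set of boundary points p such that every geodesic ray from a fixed basepoint v ∈ γ to p eventually lies in U. Then the shadows of distinct components are disjoint, and the union of all shadows equals ∂X \ {γ(+∞), γ(−∞)}. -/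
/-!
A geodesic ray from `v` to one of the endpoints of `γ` stays within `D < r` of `γ`, so these two
points lie in no shadow, while distinct components have disjoint shadows trivially.

Let `α` be a ray to any other boundary point; it drifts arbitrarily far from `γ`. It cannot return
within `r` of `γ` at arbitrarily late times: the two Morse rays follow opposite ends of `γ`, one of
them follows the end near which `α` keeps returning, and slim triangles then force `α` to stay
close to `γ` between two returns. Hence a tail of `α` lies in one component of `A`. Two rays to the
same point stay within some `K` of each other, and once `α` is `r + K` away from `γ` the geodesic
joining them stays in `A`; so all rays to that point end in the same component.
-/

/-- `f` restricted to `[a,b]` is a geodesic from `x` to `y`. -/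
def GeodesicFrom {X : Type*} [MetricSpace X] (f : ℝ → X) (a b : ℝ) (x y : X) : Prop :=
  a ≤ b ∧ f a = x ∧ f b = y ∧
    ∀ s ∈ Set.Icc a b, ∀ t ∈ Set.Icc a b, dist (f s) (f t) = |s - t|

/-- A geodesic metric space: any two points are joined by a geodesic. -/
def GeodesicSpace (X : Type*) [MetricSpace X] : Prop :=
  ∀ x y : X, ∃ (f : ℝ → X) (a b : ℝ), GeodesicFrom f a b x y

/-- `δ`-hyperbolicity via slim triangles. -/
def SlimTriangles (X : Type*) [MetricSpace X] (δ : ℝ) : Prop :=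
  ∀ (x y z : X) (f : ℝ → X) (a b : ℝ) (g : ℝ → X) (c d : ℝ) (h : ℝ → X) (e e' : ℝ),
    GeodesicFrom f a b x y → GeodesicFrom g c d y z → GeodesicFrom h e e' x z →
    (∀ s ∈ Set.Icc a b, ∃ p ∈ g '' Set.Icc c d ∪ h '' Set.Icc e e', dist (f s) p ≤ δ) ∧
    (∀ s ∈ Set.Icc c d, ∃ p ∈ f '' Set.Icc a b ∪ h '' Set.Icc e e', dist (g s) p ≤ δ) ∧
    (∀ s ∈ Set.Icc e e', ∃ p ∈ f '' Set.Icc a b ∪ g '' Set.Icc c d, dist (h s) p ≤ δ)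

/-- `f` is a geodesic ray starting at `v`. -/
def IsGeodesicRayFrom {X : Type*} [MetricSpace X] (v : X) (f : ℝ → X) : Prop :=
  f 0 = v ∧ ∀ s t : ℝ, 0 ≤ s → 0 ≤ t → dist (f s) (f t) = |s - t|

/-- The set of points at distance at least `r` from (the image of) `γ`. -/
def farSet {X : Type*} [MetricSpace X] (γ : ℝ → X) (r : ℝ) : Set X :=
  {x | r ≤ Metric.infDist x (Set.range γ)}

/-- The shadow of a set `U ⊆ X` on the boundary: those boundary points all of whose
geodesic-ray representatives from `v` eventually lie in `U`. -/
def shadow {X Bd : Type*} [MetricSpace X] (v : X) (ept : (ℝ → X) → Bd)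
    (U : Set X) : Set Bd :=
  {p | ∀ α : ℝ → X, IsGeodesicRayFrom v α → ept α = p → ∃ t₀ : ℝ, ∀ t ≥ t₀, α t ∈ U}


open Set Filter Metric

def IsQuasiGeodesic {X : Type*} [MetricSpace X] (lam ε : ℝ) (γ : ℝ → X) : Prop :=
  ∀ s t : ℝ, lam⁻¹ * |s - t| - ε ≤ dist (γ s) (γ t) ∧ dist (γ s) (γ t) ≤ lam * |s - t| + ε

def FollowsAtTop {X : Type*} [MetricSpace X] (γ β : ℝ → X) : Prop :=
  ∃ C S₀ : ℝ, (∀ s ≥ S₀, ∃ u ≥ 0, dist (γ s) (β u) ≤ C) ∧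
    ∀ T, ∃ U, ∀ u ≥ U, ∃ s ≥ T, dist (β u) (γ s) ≤ C

section RealSequences

variable {σ : ℕ → ℝ} {c : ℝ}

lemma nonneg_of_abs_sub_le {N : ℕ} (hstep : ∀ n, |σ (n + 1) - σ n| ≤ c)
    (hbig : ∀ n ≥ N, c < |σ n|) (hN : 0 ≤ σ N) : ∀ n ≥ N, 0 ≤ σ n := by
  intro n hn
  induction n, hn using Nat.le_induction with
  | base => exact hN
  | succ n hn ih =>
    have hc : c < σ n := by simpa [abs_of_nonneg ih] using hbig n hn
    linarith [(abs_le.1 (hstep n)).1]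

lemma tendsto_atTop_or_atBot_of_abs_sub_le (hstep : ∀ n, |σ (n + 1) - σ n| ≤ c)
    (h : Tendsto (fun n => |σ n|) atTop atTop) :
    Tendsto σ atTop atTop ∨ Tendsto σ atTop atBot := by
  obtain ⟨N, hN⟩ := eventually_atTop.1 (h.eventually_gt_atTop c)
  rcases le_or_gt 0 (σ N) with hσN | hσN
  · refine Or.inl (h.congr' ?_)
    filter_upwards [eventually_ge_atTop N] with n hn
    exact abs_of_nonneg (nonneg_of_abs_sub_le hstep hN hσN n hn)
  · have hneg : ∀ n ≥ N, 0 ≤ -σ n :=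
      nonneg_of_abs_sub_le (σ := fun n => -σ n)
        (fun n => by simpa only [neg_sub_neg, abs_sub_comm] using hstep n)
        (fun n hn => by simpa only [abs_neg] using hN n hn) (by linarith)
    refine Or.inr ((tendsto_neg_atTop_atBot.comp (h.congr' ?_)).congr fun n => neg_neg (σ n))
    filter_upwards [eventually_ge_atTop N] with n hn
    exact abs_of_nonpos (by linarith [hneg n hn])

lemma exists_abs_sub_le_of_tendsto_atTop (hstep : ∀ n, |σ (n + 1) - σ n| ≤ c)
    (h : Tendsto σ atTop atTop) {s : ℝ} (hs : σ 0 ≤ s) : ∃ n, |σ n - s| ≤ c := by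
  have hex : ∃ n, s ≤ σ n := (h.eventually_ge_atTop s).exists
  refine ⟨Nat.find hex, abs_le.2 ⟨?_, ?_⟩⟩
  · linarith [Nat.find_spec hex, (abs_nonneg _).trans (hstep 0)]
  · rcases hn : Nat.find hex with _ | m
    · linarith [(abs_nonneg _).trans (hstep 0)]
    · have hm : σ m < s := not_le.1 (Nat.find_min hex (by omega))
      linarith [(abs_le.1 (hstep m)).2]

end RealSequences

lemma disjoint_connectedComponentIn {Y : Type*} [TopologicalSpace Y] {F : Set Y} {x y : Y}
    (h : connectedComponentIn F x ≠ connectedComponentIn F y) :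
    Disjoint (connectedComponentIn F x) (connectedComponentIn F y) :=
  Set.disjoint_left.2 fun _ hx hy =>
    h ((connectedComponentIn_eq hx).trans (connectedComponentIn_eq hy).symm)

section

variable {X : Type*} [MetricSpace X]

namespace GeodesicFrom

variable {f : ℝ → X} {a b s : ℝ} {x y : X}

lemma dist_apply_left (hf : GeodesicFrom f a b x y) (hs : s ∈ Icc a b) : dist (f s) x = s - a := by
  rw [← hf.2.1, hf.2.2.2 s hs a ⟨le_rfl, hf.1⟩, abs_of_nonneg (by linarith [hs.1])]

lemma dist_apply_right (hf : GeodesicFrom f a b x y) (hs : s ∈ Icc a b) : dist (f s) y = b - s := by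
  rw [← hf.2.2.1, hf.2.2.2 s hs b ⟨hf.1, le_rfl⟩, abs_of_nonpos (by linarith [hs.2])]
  ring

lemma dist_apply_left_le (hf : GeodesicFrom f a b x y) (hs : s ∈ Icc a b) :
    dist (f s) x ≤ dist x y := by
  have hxy := hf.dist_apply_left ⟨hf.1, le_rfl⟩
  rw [hf.2.2.1, dist_comm] at hxy
  rw [hf.dist_apply_left hs, hxy]
  linarith [hs.2]

lemma reverse (hf : GeodesicFrom f a b x y) : GeodesicFrom (fun t => f (a + b - t)) a b y x := by
  obtain ⟨hab, hfa, hfb, hd⟩ := hf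
  refine ⟨hab, by simpa using hfb, by simpa using hfa, fun s hs t ht => ?_⟩
  rw [hd _ ⟨by linarith [hs.2], by linarith [hs.1]⟩ _ ⟨by linarith [ht.2], by linarith [ht.1]⟩,
    abs_sub_comm]
  ring_nf

lemma isPreconnected_image (hf : GeodesicFrom f a b x y) : IsPreconnected (f '' Icc a b) := by
  refine isPreconnected_Icc.image f (LipschitzOnWith.continuousOn (K := 1) ?_)
  refine LipschitzOnWith.of_dist_le_mul fun s hs t ht => ?_
  rw [hf.2.2.2 s hs t ht, Real.dist_eq, NNReal.coe_one, one_mul]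

lemma mem_connectedComponentIn (hf : GeodesicFrom f a b x y) {F : Set X}
    (hF : f '' Icc a b ⊆ F) : y ∈ connectedComponentIn F x := by
  have hx : x ∈ f '' Icc a b := ⟨a, ⟨le_rfl, hf.1⟩, hf.2.1⟩
  exact hf.isPreconnected_image.subset_connectedComponentIn hx hF ⟨b, ⟨hf.1, le_rfl⟩, hf.2.2.1⟩

lemma infDist_le_of_mem (hf : GeodesicFrom f a b x y) {S : Set X} (hx : x ∈ S) :
    ∀ q ∈ f '' Icc a b, infDist q S ≤ dist x y := by
  rintro _ ⟨s, hs, rfl⟩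
  linarith [infDist_le_dist_of_mem (x := f s) hx, hf.dist_apply_left_le hs]

lemma image_subset_farSet (hf : GeodesicFrom f a b x y) {γ : ℝ → X} {r : ℝ}
    (h : r + dist x y ≤ infDist x (range γ)) : f '' Icc a b ⊆ farSet γ r := by
  rintro _ ⟨s, hs, rfl⟩
  have := infDist_le_infDist_add_dist (x := x) (y := f s) (s := range γ)
  show r ≤ infDist (f s) (range γ)
  linarith [dist_comm x (f s), hf.dist_apply_left_le hs]

end GeodesicFrom

namespace IsGeodesicRayFrom

variable {v w : X} {α β : ℝ → X} {s t : ℝ}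

lemma geodesicFrom (hα : IsGeodesicRayFrom v α) (hs : 0 ≤ s) (hst : s ≤ t) :
    GeodesicFrom α s t (α s) (α t) :=
  ⟨hst, rfl, rfl, fun _ hu _ hu' => hα.2 _ _ (hs.trans hu.1) (hs.trans hu'.1)⟩

lemma dist_start (hα : IsGeodesicRayFrom v α) (ht : 0 ≤ t) : dist v (α t) = t := by
  rw [← hα.1, hα.2 0 t le_rfl ht, zero_sub, abs_neg, abs_of_nonneg ht]

lemma exists_geodesicFrom (hα : IsGeodesicRayFrom v α) (hs : 0 ≤ s) (ht : 0 ≤ t) :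
    ∃ (g : ℝ → X) (c d : ℝ), GeodesicFrom g c d (α s) (α t) ∧ g '' Icc c d ⊆ α '' Ici 0 := by
  rcases le_total s t with hst | hts
  · exact ⟨α, s, t, hα.geodesicFrom hs hst, image_mono fun u hu => hs.trans hu.1⟩
  · refine ⟨_, t, s, (hα.geodesicFrom ht hts).reverse, ?_⟩
    rintro _ ⟨u, hu, rfl⟩
    exact ⟨t + s - u, by simp only [mem_Ici]; linarith [hu.2], rfl⟩

lemma infDist_le_infDist_add (hα : IsGeodesicRayFrom v α) (hs : 0 ≤ s) (ht : 0 ≤ t) (S : Set X) :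
    infDist (α s) S ≤ infDist (α t) S + |s - t| :=
  hα.2 s t hs ht ▸ infDist_le_infDist_add_dist

lemma mem_connectedComponentIn (hα : IsGeodesicRayFrom v α) {F : Set X} (hs : 0 ≤ s)
    (hF : ∀ u ≥ s, α u ∈ F) (hst : s ≤ t) : α t ∈ connectedComponentIn F (α s) :=
  (hα.geodesicFrom hs hst).mem_connectedComponentIn (by rintro _ ⟨u, hu, rfl⟩; exact hF u hu.1)

lemma dist_le_two_mul (hα : IsGeodesicRayFrom v α) (hβ : IsGeodesicRayFrom v β) {u B : ℝ}
    (ht : 0 ≤ t) (hu : 0 ≤ u) (h : dist (α t) (β u) ≤ B) : dist (α t) (β t) ≤ 2 * B := by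
  have htu : |t - u| ≤ B := by
    have := abs_dist_sub_le (α t) (β u) v
    rw [dist_comm (α t) v, hα.dist_start ht, dist_comm (β u) v, hβ.dist_start hu] at this
    exact this.trans h
  calc dist (α t) (β t) ≤ dist (α t) (β u) + dist (β u) (β t) := dist_triangle _ _ _
    _ ≤ B + B := add_le_add h (by rw [hβ.2 u t hu ht, abs_sub_comm]; exact htu)
    _ = 2 * B := by ring

end IsGeodesicRayFrom

namespace SlimTriangles

variable {δ : ℝ} {f g h : ℝ → X} {a b c d e e' : ℝ} {x y z : X}

lemma exists_dist_le_of_lt (hslim : SlimTriangles X δ) (hf : GeodesicFrom f a b x y)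
    (hg : GeodesicFrom g c d y z) (hh : GeodesicFrom h e e' x z) {s : ℝ} (hs : s ∈ Icc a b)
    (hfar : dist x z + δ < dist (f s) x) : ∃ q ∈ g '' Icc c d, dist (f s) q ≤ δ := by
  obtain ⟨q, hq | ⟨u, hu, rfl⟩, hsq⟩ := (hslim x y z f a b g c d h e e' hf hg hh).1 s hs
  · exact ⟨q, hq, hsq⟩
  · linarith [dist_triangle (f s) (h u) x, hh.dist_apply_left_le hu]

lemma infDist_le_add (hslim : SlimTriangles X δ) (hf : GeodesicFrom f a b x y)
    (hg : GeodesicFrom g c d y z) (hh : GeodesicFrom h e e' x z) {S : Set X} {C : ℝ}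
    (hgC : ∀ q ∈ g '' Icc c d, infDist q S ≤ C) (hhC : ∀ q ∈ h '' Icc e e', infDist q S ≤ C) :
    ∀ q ∈ f '' Icc a b, infDist q S ≤ C + δ := by
  rintro _ ⟨s, hs, rfl⟩
  obtain ⟨q, hq, hsq⟩ := (hslim x y z f a b g c d h e e' hf hg hh).1 s hs
  linarith [hq.elim (hgC q) (hhC q), infDist_le_infDist_add_dist (x := f s) (y := q) (s := S)]

lemma exists_dist_le_of_dist_le (hslim : SlimTriangles X δ) (hδ : 0 ≤ δ) (hgeo : GeodesicSpace X)
    {σ : ℝ → X} {x' y' : X} {s R : ℝ} (hf : GeodesicFrom f a b x x')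
    (hσ : GeodesicFrom σ c d y y') (hy : dist x y ≤ R) (hy' : dist x' y' ≤ R)
    (hsa : R + 2 * δ < s - a) (hsb : R + 2 * δ < b - s) :
    ∃ q ∈ σ '' Icc c d, dist (f s) q ≤ 2 * δ := by
  -- cut the quadrilateral `x x' y' y` along a diagonal from `x'` to `y`
  obtain ⟨k, kc, kd, hk⟩ := hgeo x' y
  obtain ⟨h₁, e₁, e₁', hh₁⟩ := hgeo x y
  obtain ⟨h₂, e₂, e₂', hh₂⟩ := hgeo x' y'
  have hs : s ∈ Icc a b := ⟨by linarith [dist_nonneg.trans hy], by linarith [dist_nonneg.trans hy]⟩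
  obtain ⟨_, ⟨w, hw, rfl⟩, hsw⟩ :=
    hslim.exists_dist_le_of_lt hf hk hh₁ hs (by rw [hf.dist_apply_left hs]; linarith)
  obtain ⟨q, hq, hwq⟩ := hslim.exists_dist_le_of_lt hk hσ hh₂ hw
    (by linarith [dist_triangle (f s) (k w) x', hf.dist_apply_right hs])
  exact ⟨q, hq, by linarith [dist_triangle (f s) (k w) q]⟩

/-- Compare `σ` with the piece of `β` between `β u` and `β u'`, through two slim triangles. -/
lemma infDist_le_of_near_ray (hslim : SlimTriangles X δ) (hδ : 0 ≤ δ) (hgeo : GeodesicSpace X)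
    {v y' : X} {β σ : ℝ → X} {S : Set X} {D C u u' : ℝ} (hβ : IsGeodesicRayFrom v β)
    (hβD : ∀ t ≥ 0, infDist (β t) S ≤ D) (hy : y ∈ S) (hy' : y' ∈ S) (hu : 0 ≤ u) (hu' : 0 ≤ u')
    (hyu : dist y (β u) ≤ C) (hyu' : dist y' (β u') ≤ C) (hσ : GeodesicFrom σ c d y y') :
    ∀ q ∈ σ '' Icc c d, infDist q S ≤ max D C + 2 * δ := by
  obtain ⟨η, e, e', hη⟩ := hgeo y (β u')
  obtain ⟨g, c', d', hg⟩ := hgeo y (β u)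
  obtain ⟨g', c'', d'', hg'⟩ := hgeo y' (β u')
  obtain ⟨τ, c₀, d₀, hτ, hτβ⟩ := hβ.exists_geodesicFrom hu' hu
  have hτD : ∀ q ∈ τ '' Icc c₀ d₀, infDist q S ≤ max D C := fun q hq => by
    obtain ⟨t, ht, rfl⟩ := hτβ hq
    exact (hβD t ht).trans (le_max_left _ _)
  have hgC : ∀ q ∈ g '' Icc c' d', infDist q S ≤ max D C := fun q hq =>
    (hg.infDist_le_of_mem hy q hq).trans (hyu.trans (le_max_right _ _))
  have hηC := hslim.infDist_le_add hη hτ hg hτD hgC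
  have hg'C : ∀ q ∈ g' '' Icc c'' d'', infDist q S ≤ max D C + δ := fun q hq =>
    (hg'.infDist_le_of_mem hy' q hq).trans (by linarith [le_max_right D C])
  intro q hq
  linarith [hslim.infDist_le_add hσ hg' hη hg'C hηC q hq]

end SlimTriangles

namespace IsQuasiGeodesic

variable {lam ε : ℝ} {γ : ℝ → X}

lemma comp_neg (hγ : IsQuasiGeodesic lam ε γ) : IsQuasiGeodesic lam ε (fun s => γ (-s)) :=
  fun s t => by simpa only [neg_sub_neg, abs_sub_comm] using hγ (-s) (-t)

lemma abs_sub_le (hγ : IsQuasiGeodesic lam ε γ) (hlam : 0 < lam) (s t : ℝ) :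
    |s - t| ≤ lam * (dist (γ s) (γ t) + ε) := by
  have := (hγ s t).1
  calc |s - t| = lam * (lam⁻¹ * |s - t|) := by field_simp
    _ ≤ lam * (dist (γ s) (γ t) + ε) := by gcongr; linarith

end IsQuasiGeodesic

namespace IsGeodesicRayFrom

variable {v w : X} {α β β₁ β₂ γ : ℝ → X} {lam ε D r δ : ℝ}

lemma followsAtTop (hβ : IsGeodesicRayFrom v β) (hγ : IsQuasiGeodesic lam ε γ) (hlam : 0 ≤ lam)
    {σ : ℕ → ℝ} {C c : ℝ} (hσ : ∀ n : ℕ, dist (β n) (γ (σ n)) ≤ C)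
    (hstep : ∀ n, |σ (n + 1) - σ n| ≤ c) (htend : Tendsto σ atTop atTop) : FollowsAtTop γ β := by
  refine ⟨max (lam * c + ε + C) (C + 1), σ 0, fun s hs => ?_, fun T => ?_⟩
  · obtain ⟨n, hn⟩ := exists_abs_sub_le_of_tendsto_atTop hstep htend hs
    refine ⟨n, n.cast_nonneg, le_max_of_le_left ?_⟩
    calc dist (γ s) (β n) ≤ dist (γ s) (γ (σ n)) + dist (γ (σ n)) (β n) := dist_triangle _ _ _
      _ ≤ (lam * |s - σ n| + ε) + C := add_le_add (hγ _ _).2 (dist_comm (β n) _ ▸ hσ n)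
      _ ≤ lam * c + ε + C := by rw [abs_sub_comm]; gcongr
  · obtain ⟨N, hN⟩ := eventually_atTop.1 (htend.eventually_ge_atTop T)
    refine ⟨N, fun u hu => ⟨σ ⌊u⌋₊, hN _ (Nat.le_floor hu), le_max_of_le_right ?_⟩⟩
    have hu0 : 0 ≤ u := N.cast_nonneg.trans hu
    have hfloor : dist (β u) (β ⌊u⌋₊) ≤ 1 := by
      rw [hβ.2 _ _ hu0 (Nat.cast_nonneg _), abs_of_nonneg (sub_nonneg.2 (Nat.floor_le hu0))]
      linarith [Nat.lt_floor_add_one u]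
    linarith [dist_triangle (β u) (β ⌊u⌋₊) (γ (σ ⌊u⌋₊)), hσ ⌊u⌋₊]

/-- The parameters `σ n` of points of `γ` near `β n` move by bounded steps and escape to
infinity; hence they tend to `+∞` or to `-∞`. -/
lemma followsAtTop_or_followsAtTop_neg (hβ : IsGeodesicRayFrom v β)
    (hγ : IsQuasiGeodesic lam ε γ) (hlam : 0 < lam) (hβD : ∀ u ≥ 0, infDist (β u) (range γ) ≤ D) :
    FollowsAtTop γ β ∨ FollowsAtTop (fun s => γ (-s)) β := by
  have hnear : ∀ n : ℕ, ∃ s, dist (β n) (γ s) < D + 1 := fun n => by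
    obtain ⟨_, ⟨s, rfl⟩, hs⟩ := (infDist_lt_iff (range_nonempty γ)).1
      ((hβD n n.cast_nonneg).trans_lt (lt_add_one D))
    exact ⟨s, hs⟩
  choose σ hσ using hnear
  have hstep : ∀ n, |σ (n + 1) - σ n| ≤ lam * (2 * D + 3 + ε) := fun n => by
    have h1 : dist (β (n + 1 : ℕ)) (β n) = 1 := by
      rw [hβ.2 _ _ (Nat.cast_nonneg _) (Nat.cast_nonneg _)]; push_cast; simp
    have h2 := dist_triangle4 (γ (σ (n + 1))) (β (n + 1 : ℕ)) (β n) (γ (σ n))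
    rw [dist_comm _ (β _)] at h2
    calc |σ (n + 1) - σ n| ≤ lam * (dist (γ (σ (n + 1))) (γ (σ n)) + ε) := hγ.abs_sub_le hlam _ _
      _ ≤ lam * (2 * D + 3 + ε) := by gcongr; linarith [hσ n, hσ (n + 1)]
  have hgrowth : ∀ n : ℕ, ((n : ℝ) - (2 * (D + 1) + lam * |σ 0| + ε)) / lam ≤ |σ n| := fun n => by
    have h1 : dist (β n) (β 0) = n := by
      rw [hβ.2 _ _ n.cast_nonneg le_rfl, sub_zero, abs_of_nonneg n.cast_nonneg]
    have h2 := dist_triangle4 (β n) (γ (σ n)) (γ (σ 0)) (β 0)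
    have h3 : lam * |σ n - σ 0| ≤ lam * (|σ n| + |σ 0|) := by gcongr; exact abs_sub _ _
    have h4 : dist (γ (σ 0)) (β 0) < D + 1 := by simpa [dist_comm] using hσ 0
    rw [div_le_iff₀ hlam]
    linarith [hσ n, (hγ (σ n) (σ 0)).2]
  have hesc : Tendsto (fun n => |σ n|) atTop atTop :=
    tendsto_atTop_mono hgrowth
      ((tendsto_atTop_add_const_right _ _ tendsto_natCast_atTop_atTop).atTop_div_const hlam)
  rcases tendsto_atTop_or_atBot_of_abs_sub_le hstep hesc with h | h
  · exact Or.inl (hβ.followsAtTop hγ hlam.le (fun n => (hσ n).le) hstep h)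
  · refine Or.inr (hβ.followsAtTop hγ.comp_neg hlam.le (σ := fun n => -σ n)
      (fun n => by simpa only [neg_neg] using (hσ n).le)
      (fun n => by simpa only [neg_sub_neg, abs_sub_comm] using hstep n)
      (tendsto_neg_atBot_atTop.comp h))

lemma exists_dist_le_of_followsAtTop (hβ₁ : IsGeodesicRayFrom v β₁) (hβ₂ : IsGeodesicRayFrom v β₂)
    (h₁ : FollowsAtTop γ β₁) (h₂ : FollowsAtTop γ β₂) : ∃ K, ∀ t ≥ 0, dist (β₁ t) (β₂ t) ≤ K := by
  obtain ⟨C₁, -, -, htrack⟩ := h₁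
  obtain ⟨C₂, S₂, hdense, -⟩ := h₂
  obtain ⟨U, hU⟩ := htrack S₂
  refine ⟨max (2 * U) (2 * (C₁ + C₂)), fun t ht => ?_⟩
  rcases le_total t U with htU | hUt
  · refine le_max_of_le_left ?_
    linarith [dist_triangle (β₁ t) v (β₂ t), dist_comm (β₁ t) v, hβ₁.dist_start ht,
      hβ₂.dist_start ht]
  · obtain ⟨s, hs, hts⟩ := hU t hUt
    obtain ⟨u, hu, hsu⟩ := hdense s hs
    exact le_max_of_le_right (hβ₁.dist_le_two_mul hβ₂ ht hu
      (by linarith [dist_triangle (β₁ t) (γ s) (β₂ u)]))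

lemma followsAtTop_or_followsAtTop (hβ₁ : IsGeodesicRayFrom v β₁) (hβ₂ : IsGeodesicRayFrom v β₂)
    (hγ : IsQuasiGeodesic lam ε γ) (hlam : 0 < lam)
    (hD₁ : ∀ u ≥ 0, infDist (β₁ u) (range γ) ≤ D) (hD₂ : ∀ u ≥ 0, infDist (β₂ u) (range γ) ≤ D)
    (hfar : ¬∃ K, ∀ t ≥ 0, dist (β₁ t) (β₂ t) ≤ K) : FollowsAtTop γ β₁ ∨ FollowsAtTop γ β₂ := by
  rcases hβ₁.followsAtTop_or_followsAtTop_neg hγ hlam hD₁ with h₁ | h₁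
  · exact Or.inl h₁
  rcases hβ₂.followsAtTop_or_followsAtTop_neg hγ hlam hD₂ with h₂ | h₂
  · exact Or.inr h₂
  exact (hfar (hβ₁.exists_dist_le_of_followsAtTop hβ₂ h₁ h₂)).elim

/-- If `α` were far from `γ` at time `t₁`, pick returns `α t₂ ≈ γ s₂` before and
`α t₃ ≈ γ s₃` after it: `α t₁` is `2 δ`-close to a geodesic from `γ s₂` to `γ s₃`, which stays
close to `γ` because `β` passes near both of its ends. -/
lemma exists_infDist_le_of_frequently_near (hslim : SlimTriangles X δ) (hδ : 0 ≤ δ)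
    (hgeo : GeodesicSpace X) (hα : IsGeodesicRayFrom w α) (hβ : IsGeodesicRayFrom v β)
    (hβD : ∀ u ≥ 0, infDist (β u) (range γ) ≤ D) (hfollow : FollowsAtTop γ β)
    (hnear : ∀ T, ∃ t ≥ T, ∃ s ≥ T, dist (α t) (γ s) < r) :
    ∃ K, ∀ t ≥ 0, infDist (α t) (range γ) ≤ K := by
  obtain ⟨C, S₀, hdense, -⟩ := hfollow
  have hD : 0 ≤ D := infDist_nonneg.trans (hβD 0 le_rfl)
  obtain ⟨t₂, ht₂, s₂, hs₂, hd₂⟩ := hnear (max S₀ 0)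
  have ht₂0 : 0 ≤ t₂ := (le_max_right _ _).trans ht₂
  refine ⟨max D C + 4 * δ + t₂ + 2 * r + 2 * δ, fun t₁ ht₁ => ?_⟩
  by_contra! hpeak
  have hr : 0 < r := dist_nonneg.trans_lt hd₂
  have hgap₂ : r + 2 * δ < t₁ - t₂ := by
    have h1 := hα.infDist_le_infDist_add ht₁ ht₂0 (range γ)
    have h2 : infDist (α t₂) (range γ) < r :=
      (infDist_le_dist_of_mem (mem_range_self s₂)).trans_lt hd₂
    rcases lt_abs.1 (show t₂ + r + 2 * δ < |t₁ - t₂| by linarith [le_max_left D C]) with h | h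
      <;> linarith
  obtain ⟨t₃, ht₃, s₃, hs₃, hd₃⟩ := hnear (max S₀ (t₁ + r + 2 * δ + 1))
  have hgap₃ : r + 2 * δ < t₃ - t₁ := by linarith [le_max_right S₀ (t₁ + r + 2 * δ + 1)]
  obtain ⟨u₂, hu₂, hsu₂⟩ := hdense s₂ ((le_max_left _ _).trans hs₂)
  obtain ⟨u₃, hu₃, hsu₃⟩ := hdense s₃ ((le_max_left _ _).trans hs₃)
  obtain ⟨σ, c, d, hσ⟩ := hgeo (γ s₂) (γ s₃)
  obtain ⟨q, hq, hq₁⟩ := hslim.exists_dist_le_of_dist_le hδ hgeo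
    (hα.geodesicFrom ht₂0 (by linarith)) hσ hd₂.le hd₃.le (by linarith) hgap₃
  have hqγ := hslim.infDist_le_of_near_ray hδ hgeo hβ hβD (mem_range_self s₂) (mem_range_self s₃)
    hu₂ hu₃ hsu₂ hsu₃ hσ q hq
  linarith [infDist_le_infDist_add_dist (x := α t₁) (y := q) (s := range γ)]

lemma frequently_near_atTop_or_atBot (hα : IsGeodesicRayFrom w α) (hγ : IsQuasiGeodesic lam ε γ)
    (hlam : 0 < lam) (h : ∀ t₀ ≥ 0, ∃ t ≥ t₀, infDist (α t) (range γ) < r) :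
    (∀ T, ∃ t ≥ T, ∃ s ≥ T, dist (α t) (γ s) < r) ∨
      ∀ T, ∃ t ≥ T, ∃ s ≥ T, dist (α t) (γ (-s)) < r := by
  have hlarge : ∀ T, ∃ t ≥ T, ∃ s, T ≤ |s| ∧ dist (α t) (γ s) < r := by
    intro T
    obtain ⟨t, ht, hlt⟩ := h (max 0 (max T (lam * T + dist w (γ 0) + ε + r))) (le_max_left _ _)
    obtain ⟨_, ⟨s, rfl⟩, hs⟩ := (infDist_lt_iff (range_nonempty γ)).1 hlt
    have ht0 : 0 ≤ t := (le_max_left _ _).trans ht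
    have hT : lam * T + dist w (γ 0) + ε + r ≤ t :=
      (le_max_right _ _).trans ((le_max_right _ _).trans ht)
    have hws := dist_triangle4 w (γ 0) (γ s) (α t)
    rw [hα.dist_start ht0, dist_comm (γ s)] at hws
    have h0s := (hγ 0 s).2
    rw [zero_sub, abs_neg] at h0s
    have hlamT : lam * T ≤ lam * |s| := by linarith
    exact ⟨t, (le_max_left _ _).trans ((le_max_right _ _).trans ht), s,
      le_of_mul_le_mul_left hlamT hlam, hs⟩
  by_contra! hcon
  obtain ⟨⟨T₁, hT₁⟩, T₂, hT₂⟩ := hcon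
  obtain ⟨t, ht, s, hs, hd⟩ := hlarge (max T₁ T₂)
  rcases le_abs'.1 hs with hs | hs
  · have := hT₂ t (le_of_max_le_right ht) (-s) (by linarith [le_max_right T₁ T₂])
    rw [neg_neg] at this
    linarith
  · linarith [hT₁ t (le_of_max_le_left ht) s (le_of_max_le_left hs)]

lemma eventually_mem_farSet (hα : IsGeodesicRayFrom w α)
    (hunb : ¬∃ K, ∀ t ≥ 0, infDist (α t) (range γ) ≤ K) (hslim : SlimTriangles X δ) (hδ : 0 ≤ δ)
    (hgeo : GeodesicSpace X) (hγ : IsQuasiGeodesic lam ε γ) (hlam : 0 < lam)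
    (hβ₁ : IsGeodesicRayFrom v β₁) (hβ₂ : IsGeodesicRayFrom v β₂)
    (hD₁ : ∀ u ≥ 0, infDist (β₁ u) (range γ) ≤ D) (hD₂ : ∀ u ≥ 0, infDist (β₂ u) (range γ) ≤ D)
    (hfar : ¬∃ K, ∀ t ≥ 0, dist (β₁ t) (β₂ t) ≤ K) (r : ℝ) :
    ∃ t₀ ≥ 0, ∀ t ≥ t₀, α t ∈ farSet γ r := by
  have hnot_near : ∀ γ' : ℝ → X, IsQuasiGeodesic lam ε γ' → range γ' = range γ →
      ¬∀ T, ∃ t ≥ T, ∃ s ≥ T, dist (α t) (γ' s) < r := by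
    intro γ' hγ' hrange hnear
    rw [← hrange] at hD₁ hD₂ hunb
    rcases hβ₁.followsAtTop_or_followsAtTop hβ₂ hγ' hlam hD₁ hD₂ hfar with h | h
    · exact hunb (hα.exists_infDist_le_of_frequently_near hslim hδ hgeo hβ₁ hD₁ h hnear)
    · exact hunb (hα.exists_infDist_le_of_frequently_near hslim hδ hgeo hβ₂ hD₂ h hnear)
  by_contra! hnot
  rcases hα.frequently_near_atTop_or_atBot hγ hlam (r := r)
      (fun t₀ ht₀ => by simpa [farSet] using hnot t₀ ht₀) with h | h
  · exact hnot_near γ hγ rfl h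
  · exact hnot_near _ hγ.comp_neg (neg_surjective.range_comp γ) h

lemma connectedComponentIn_farSet_eq (hgeo : GeodesicSpace X) (hα : IsGeodesicRayFrom w α)
    (hβ : IsGeodesicRayFrom v β) {a b : ℝ} (hK : ∃ K, ∀ t ≥ 0, dist (α t) (β t) ≤ K)
    (hunb : ¬∃ K, ∀ t ≥ 0, infDist (α t) (range γ) ≤ K) (ha : 0 ≤ a) (hb : 0 ≤ b)
    (hαF : ∀ t ≥ a, α t ∈ farSet γ r) (hβF : ∀ t ≥ b, β t ∈ farSet γ r) :
    connectedComponentIn (farSet γ r) (α a) = connectedComponentIn (farSet γ r) (β b) := by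
  obtain ⟨K, hK⟩ := hK
  push Not at hunb
  obtain ⟨u, hu, hbig⟩ := hunb (max (r + K) (infDist w (range γ) + max a b))
  have hfar : r + K < infDist (α u) (range γ) := (le_max_left _ _).trans_lt hbig
  have hua : max a b ≤ u := by
    have := hα.infDist_le_infDist_add hu le_rfl (range γ)
    rw [hα.1, sub_zero, abs_of_nonneg hu] at this
    linarith [(le_max_right _ _).trans_lt hbig]
  obtain ⟨f, c, d, hf⟩ := hgeo (α u) (β u)
  have hbridge : β u ∈ connectedComponentIn (farSet γ r) (α u) :=
    hf.mem_connectedComponentIn (hf.image_subset_farSet (by linarith [hK u hu]))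
  exact (connectedComponentIn_eq (hα.mem_connectedComponentIn ha hαF (le_of_max_le_left hua))).trans
    ((connectedComponentIn_eq hbridge).trans
      (connectedComponentIn_eq (hβ.mem_connectedComponentIn hb hβF (le_of_max_le_right hua))).symm)

end IsGeodesicRayFrom

section Shadow

variable {Bd : Type*} {v : X} {ept : (ℝ → X) → Bd} {U U' : Set X}

lemma disjoint_shadow (hsurj : ∀ p : Bd, ∃ α : ℝ → X, IsGeodesicRayFrom v α ∧ ept α = p)
    (h : Disjoint U U') : Disjoint (shadow v ept U) (shadow v ept U') := by
  refine Set.disjoint_left.2 fun p hp hp' => ?_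
  obtain ⟨α, hα, rfl⟩ := hsurj p
  obtain ⟨t, ht⟩ := hp α hα rfl
  obtain ⟨t', ht'⟩ := hp' α hα rfl
  exact h.ne_of_mem (ht _ (le_max_left t t')) (ht' _ (le_max_right t t')) rfl

lemma notMem_shadow_of_forall_notMem {α : ℝ → X} (hα : IsGeodesicRayFrom v α)
    (hU : ∀ t ≥ 0, α t ∉ U) : ept α ∉ shadow v ept U := fun hp => by
  obtain ⟨t₀, ht₀⟩ := hp α hα rfl
  exact hU _ (le_max_right t₀ 0) (ht₀ _ (le_max_left t₀ 0))

end Shadow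

end

theorem shadows_disjoint_and_cover_general
    {X Bd : Type*} [MetricSpace X]
    (δ : ℝ) (hδ : 0 ≤ δ) (hgeo : GeodesicSpace X) (hslim : SlimTriangles X δ)
    (v : X) (ept : (ℝ → X) → Bd)
    (hsurj : ∀ p : Bd, ∃ α : ℝ → X, IsGeodesicRayFrom v α ∧ ept α = p)
    (hept : ∀ α β : ℝ → X, IsGeodesicRayFrom v α → IsGeodesicRayFrom v β →
      (ept α = ept β ↔ ∃ K : ℝ, ∀ t : ℝ, 0 ≤ t → dist (α t) (β t) ≤ K))
    (lam ε : ℝ) (hlam : 1 ≤ lam)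
    (γ : ℝ → X)
    (hγ : ∀ s t : ℝ, lam⁻¹ * |s - t| - ε ≤ dist (γ s) (γ t) ∧
      dist (γ s) (γ t) ≤ lam * |s - t| + ε)
    (pPlus pMinus : Bd) (hpm : pPlus ≠ pMinus)
    (hends : ∀ α : ℝ → X, IsGeodesicRayFrom v α →
      ((ept α = pPlus ∨ ept α = pMinus) ↔
        ∃ K : ℝ, ∀ t : ℝ, 0 ≤ t → Metric.infDist (α t) (Set.range γ) ≤ K))
    (D r : ℝ) (hr : D < r)
    (hMorse : ∀ α : ℝ → X, IsGeodesicRayFrom v α → (ept α = pPlus ∨ ept α = pMinus) →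
      ∀ t : ℝ, 0 ≤ t → Metric.infDist (α t) (Set.range γ) ≤ D) :
    (∀ U U' : Set X,
      (∃ x ∈ farSet γ r, U = connectedComponentIn (farSet γ r) x) →
      (∃ x ∈ farSet γ r, U' = connectedComponentIn (farSet γ r) x) →
      U ≠ U' → Disjoint (shadow v ept U) (shadow v ept U')) ∧
    (⋃ U ∈ {U : Set X | ∃ x ∈ farSet γ r, U = connectedComponentIn (farSet γ r) x},
      shadow v ept U) = ({pPlus, pMinus} : Set Bd)ᶜ := by
  obtain ⟨βPlus, hβPlus, rfl⟩ := hsurj pPlus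
  obtain ⟨βMinus, hβMinus, rfl⟩ := hsurj pMinus
  have hunb : ∀ α, IsGeodesicRayFrom v α → ept α ∉ ({ept βPlus, ept βMinus} : Set Bd) →
      ¬∃ K, ∀ t ≥ 0, infDist (α t) (range γ) ≤ K := fun α hα hp hK => hp ((hends α hα).2 hK)
  have htail : ∀ α, IsGeodesicRayFrom v α → ept α ∉ ({ept βPlus, ept βMinus} : Set Bd) →
      ∃ t₀ ≥ 0, ∀ t ≥ t₀, α t ∈ farSet γ r := fun α hα hp =>
    hα.eventually_mem_farSet (hunb α hα hp) hslim hδ hgeo hγ (by linarith) hβPlus hβMinus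
      (hMorse βPlus hβPlus (Or.inl rfl)) (hMorse βMinus hβMinus (Or.inr rfl))
      (fun h => hpm ((hept _ _ hβPlus hβMinus).2 h)) r
  refine ⟨?_, ?_⟩
  · rintro _ _ ⟨x, -, rfl⟩ ⟨x', -, rfl⟩ hne
    exact disjoint_shadow hsurj (disjoint_connectedComponentIn hne)
  ext p
  simp only [mem_iUnion, exists_prop]
  constructor
  · rintro ⟨_, ⟨x, -, rfl⟩, hp⟩ hpe
    obtain ⟨α, hα, rfl⟩ := hsurj p
    refine notMem_shadow_of_forall_notMem hα (fun t ht hU => ?_) hp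
    have hfar : r ≤ infDist (α t) (range γ) := connectedComponentIn_subset (farSet γ r) x hU
    exact not_lt_of_ge (hMorse α hα hpe t ht) (hr.trans_le hfar)
  · intro hp
    obtain ⟨α₀, hα₀, rfl⟩ := hsurj p
    obtain ⟨t₀, ht₀, hF₀⟩ := htail α₀ hα₀ hp
    refine ⟨_, ⟨α₀ t₀, hF₀ t₀ le_rfl, rfl⟩, fun α hα hαp => ?_⟩
    obtain ⟨t₁, ht₁, hF₁⟩ := htail α hα (hαp ▸ hp)
    refine ⟨t₁, fun t ht => ?_⟩
    rw [hα₀.connectedComponentIn_farSet_eq hgeo hα ((hept _ _ hα₀ hα).1 hαp.symm)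
      (hunb α₀ hα₀ hp) ht₀ ht₁ hF₀ hF₁]
    exact hα.mem_connectedComponentIn ht₁ hF₁ ht

/-- Shadows of distinct connected components of `{x : d(x,γ) ≥ r}` (with `r` larger
than the Morse constant `D` of the bi-infinite quasi-geodesic `γ`) are disjoint, and
their union is the complement of the two endpoints of `γ` in the boundary. -/
theorem shadows_disjoint_and_cover
    {X Bd : Type*} [MetricSpace X] [ProperSpace X]
    (δ : ℝ) (hδ : 0 ≤ δ) (hgeo : GeodesicSpace X) (hslim : SlimTriangles X δ)
    (v : X) (ept : (ℝ → X) → Bd)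
    (hsurj : ∀ p : Bd, ∃ α : ℝ → X, IsGeodesicRayFrom v α ∧ ept α = p)
    (hept : ∀ α β : ℝ → X, IsGeodesicRayFrom v α → IsGeodesicRayFrom v β →
      (ept α = ept β ↔ ∃ K : ℝ, ∀ t : ℝ, 0 ≤ t → dist (α t) (β t) ≤ K))
    (lam ε : ℝ) (hlam : 1 ≤ lam) (hε : 0 ≤ ε)
    (γ : ℝ → X)
    (hγ : ∀ s t : ℝ, lam⁻¹ * |s - t| - ε ≤ dist (γ s) (γ t) ∧
      dist (γ s) (γ t) ≤ lam * |s - t| + ε)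
    (pPlus pMinus : Bd) (hpm : pPlus ≠ pMinus)
    (hends : ∀ α : ℝ → X, IsGeodesicRayFrom v α →
      ((ept α = pPlus ∨ ept α = pMinus) ↔
        ∃ K : ℝ, ∀ t : ℝ, 0 ≤ t → Metric.infDist (α t) (Set.range γ) ≤ K))
    (D r : ℝ) (hD : 0 ≤ D) (hr : D < r)
    (hMorse : ∀ α : ℝ → X, IsGeodesicRayFrom v α → (ept α = pPlus ∨ ept α = pMinus) →
      ∀ t : ℝ, 0 ≤ t → Metric.infDist (α t) (Set.range γ) ≤ D) :
    (∀ U U' : Set X,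
      (∃ x ∈ farSet γ r, U = connectedComponentIn (farSet γ r) x) →
      (∃ x ∈ farSet γ r, U' = connectedComponentIn (farSet γ r) x) →
      U ≠ U' → Disjoint (shadow v ept U) (shadow v ept U')) ∧
    (⋃ U ∈ {U : Set X | ∃ x ∈ farSet γ r, U = connectedComponentIn (farSet γ r) x},
      shadow v ept U) = ({pPlus, pMinus} : Set Bd)ᶜ :=
  shadows_disjoint_and_cover_general δ hδ hgeo hslim v ept hsurj hept lam ε hlam γ hγ pPlus pMinus
    hpm hends D r hr hMorse
end

section
/- Let G be a δ-hyperbolic group with finite generating set S. Then every finite normal subgroup of G is conjugate into (indeed contained in) the ball of radius 4δ + 2 about the identity in the word metric, and consequently G has a unique maximal finite normal subgroup, which is computable given a solution to the word problem and the constant δ. -/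
/-- The Cayley graph of `G` with respect to a generating set `S`. -/
def cayley {G : Type*} [Group G] (S : Set G) : SimpleGraph G :=
  SimpleGraph.fromRel (fun x y => ∃ s ∈ S, y = x * s)

/-- `δ`-slim geodesic triangles in a graph: every vertex of a geodesic side is
within graph-distance `δ` of the union of the other two sides. -/
def GraphSlim {V : Type*} (C : SimpleGraph V) (δ : ℕ) : Prop :=
  ∀ (x y z : V) (p : C.Walk x y) (q : C.Walk y z) (r : C.Walk x z),
    p.length = C.dist x y → q.length = C.dist y z → r.length = C.dist x z →
    ∀ u ∈ r.support, ∃ w, (w ∈ p.support ∨ w ∈ q.support) ∧ C.dist u w ≤ δ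

open SimpleGraph

section Aux

variable {G : Type*} [Group G] {S : Set G}

lemma cayley_adj {x y : G} :
    (cayley S).Adj x y ↔ x ≠ y ∧ ((∃ s ∈ S, y = x * s) ∨ ∃ s ∈ S, x = y * s) := by
  simp [cayley, SimpleGraph.fromRel_adj]

/-- Left translation as an automorphism of the Cayley graph. -/
def cayleyIso (S : Set G) (g : G) : cayley S ≃g cayley S where
  toEquiv := Equiv.mulLeft g
  map_rel_iff' := by
    intro x y
    simp only [Equiv.coe_mulLeft, cayley_adj, ne_eq, mul_right_inj, mul_assoc]

lemma cayley_dist_smul (g x y : G) :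
    (cayley S).dist (g * x) (g * y) = (cayley S).dist x y := by
  have key : ∀ (h u v : G), (cayley S).dist (h * u) (h * v) ≤ (cayley S).dist u v := by
    intro h u v
    rcases eq_or_ne ((cayley S).dist u v) 0 with h0 | h0
    · rw [h0, Nat.le_zero, SimpleGraph.dist_eq_zero_iff_eq_or_not_reachable]
      rcases SimpleGraph.dist_eq_zero_iff_eq_or_not_reachable.mp h0 with rfl | hr
      · exact Or.inl rfl
      · exact Or.inr fun hre => hr ((Iso.reachable_iff (φ := cayleyIso S h)).mp hre)
    · obtain ⟨p, hp⟩ := SimpleGraph.exists_walk_of_dist_ne_zero h0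
      calc (cayley S).dist (h * u) (h * v) ≤ (p.map (cayleyIso S h).toHom).length :=
            SimpleGraph.dist_le _
        _ = p.length := Walk.length_map _ _
        _ = (cayley S).dist u v := hp
  refine le_antisymm (key g x y) ?_
  have := key g⁻¹ (g * x) (g * y)
  simpa using this

lemma cayley_reachable_one (hgen : Subgroup.closure S = ⊤) (g : G) :
    (cayley S).Reachable 1 g := by
  have hg : g ∈ Subgroup.closure S := by rw [hgen]; trivial
  induction hg using Subgroup.closure_induction with
  | mem s hs =>
    rcases eq_or_ne s 1 with rfl | hne
    · exact Reachable.refl 1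
    · exact Adj.reachable (cayley_adj.mpr ⟨Ne.symm hne, Or.inl ⟨s, hs, (one_mul s).symm⟩⟩)
  | one => exact Reachable.refl 1
  | mul a b _ _ ra rb =>
    have : (cayley S).Reachable (a * 1) (a * b) := rb.map (cayleyIso S a).toHom
    exact ra.trans (by simpa using this)
  | inv a _ ra =>
    have : (cayley S).Reachable (a⁻¹ * 1) (a⁻¹ * a) := ra.map (cayleyIso S a⁻¹).toHom
    simpa using this.symm

lemma cayley_connected (hgen : Subgroup.closure S = ⊤) : (cayley S).Connected :=
  ⟨fun x y => (cayley_reachable_one hgen x).symm.trans (cayley_reachable_one hgen y)⟩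

lemma ball_finite (hSfin : S.Finite) (n : ℕ) :
    {g : G | ∃ p : (cayley S).Walk g 1, p.length ≤ n}.Finite := by
  induction n with
  | zero =>
    apply Set.Finite.subset (Set.finite_singleton (1 : G))
    rintro g ⟨p, hp⟩
    simp [Walk.eq_of_length_eq_zero (Nat.le_zero.mp hp)]
  | succ n ih =>
    apply Set.Finite.subset
      (ih.union (Set.Finite.image2 (fun v s => v * s) ih (hSfin.union hSfin.inv)))
    rintro g ⟨p, hp⟩
    cases p with
    | nil => exact Or.inl ⟨Walk.nil, Nat.zero_le _⟩
    | @cons _ v _ h q =>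
      have hq : v ∈ {g : G | ∃ p : (cayley S).Walk g 1, p.length ≤ n} :=
        ⟨q, by simpa using Nat.succ_le_succ_iff.mp (by simpa using hp)⟩
      rcases cayley_adj.mp h with ⟨-, ⟨s, hs, hvs⟩ | ⟨s, hs, hgs⟩⟩
      · exact Or.inr (Set.mem_image2.mpr ⟨v, hq, s⁻¹,
          Set.mem_union_right _ (Set.inv_mem_inv.mpr hs), by rw [hvs]; group⟩)
      · exact Or.inr (Set.mem_image2.mpr ⟨v, hq, s, Set.mem_union_left _ hs, hgs.symm⟩)

section walks
variable {V : Type*} {C : SimpleGraph V} {u v : V}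

lemma walk_to_getVert : ∀ {u v : V} (p : C.Walk u v) (i : ℕ),
    ∃ q : C.Walk u (p.getVert i), q.length ≤ i := by
  intro u v p
  induction p with
  | nil => exact fun i => ⟨Walk.nil, Nat.zero_le i⟩
  | cons h q ih =>
    intro i
    cases i with
    | zero => exact ⟨Walk.nil, le_rfl⟩
    | succ n =>
      obtain ⟨q', hq'⟩ := ih n
      exact ⟨q'.cons h, by simpa using Nat.succ_le_succ hq'⟩

lemma walk_from_getVert : ∀ {u v : V} (p : C.Walk u v) (i : ℕ),
    ∃ q : C.Walk (p.getVert i) v, q.length ≤ p.length - i := by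
  intro u v p
  induction p with
  | nil => exact fun i => ⟨Walk.nil, Nat.zero_le _⟩
  | cons h q ih =>
    intro i
    cases i with
    | zero => exact ⟨Walk.cons h q, le_of_eq (Nat.sub_zero _).symm⟩
    | succ n =>
      obtain ⟨q', hq'⟩ := ih n
      exact ⟨q', by simpa using hq'⟩

lemma dist_getVert_left (p : C.Walk u v) (i : ℕ) : C.dist u (p.getVert i) ≤ i := by
  obtain ⟨q, hq⟩ := walk_to_getVert p i
  exact le_trans (SimpleGraph.dist_le q) hq

lemma dist_getVert_right (p : C.Walk u v) (i : ℕ) :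
    C.dist (p.getVert i) v ≤ p.length - i := by
  obtain ⟨q, hq⟩ := walk_from_getVert p i
  exact le_trans (SimpleGraph.dist_le q) hq

lemma dist_add_dist_of_mem_support [DecidableEq V] {x y w : V} (p : C.Walk x y)
    (hw : w ∈ p.support) : C.dist x w + C.dist w y ≤ p.length := by
  calc C.dist x w + C.dist w y
      ≤ (p.takeUntil w hw).length + (p.dropUntil w hw).length :=
        add_le_add (SimpleGraph.dist_le _) (SimpleGraph.dist_le _)
    _ = p.length := by rw [← Walk.length_append, p.take_spec hw]

end walks
end Aux

/-- In a `δ`-hyperbolic group every finite normal subgroup lies in the ball of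
radius `4δ + 2` about the identity, and consequently there is a unique maximal
finite normal subgroup. -/
theorem finite_normal_subgroups_bounded_and_max
    {G : Type*} [Group G] (S : Set G) (hSfin : S.Finite)
    (hgen : Subgroup.closure S = ⊤)
    (δ : ℕ) (hslim : GraphSlim (cayley S) δ) :
    (∀ N : Subgroup G, N.Normal → Finite ↥N →
      ∀ g ∈ N, (cayley S).dist (1 : G) g ≤ 4 * δ + 2) ∧
    ∃ M : Subgroup G, M.Normal ∧ Finite ↥M ∧
      (∀ N : Subgroup G, N.Normal → Finite ↥N → N ≤ M) := by
  classical
  have hconn := cayley_connected hgen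
  have hpart1 : ∀ N : Subgroup G, N.Normal → Finite ↥N →
      ∀ g ∈ N, (cayley S).dist (1 : G) g ≤ 4 * δ + 2 := by
    intro N hNorm hNfin g hg
    have hNset : (N : Set G).Finite := Set.toFinite _
    set T : Finset G := hNset.toFinset with hT
    have hmemT : ∀ {n : G}, n ∈ T ↔ n ∈ N := by intro n; simp [hT]
    have hT1 : (1 : G) ∈ T := hmemT.mpr N.one_mem
    set R : G → ℕ := fun x => T.sup fun n => (cayley S).dist x n with hRdef
    have hR_le : ∀ x n, n ∈ N → (cayley S).dist x n ≤ R x := fun x n hn =>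
      Finset.le_sup (hmemT.mpr hn)
    have hR_ex : ∀ x : G, ∃ n ∈ N, R x = (cayley S).dist x n := by
      intro x
      obtain ⟨n, hn, heq⟩ := Finset.exists_mem_eq_sup T ⟨1, hT1⟩ (fun n => (cayley S).dist x n)
      exact ⟨n, hmemT.mp hn, heq⟩
    obtain ⟨x₀, hx₀⟩ : sInf (Set.range R) ∈ Set.range R := Nat.sInf_mem ⟨R 1, 1, rfl⟩
    have hmin : ∀ x, R x₀ ≤ R x := fun x => by rw [hx₀]; exact Nat.sInf_le ⟨x, rfl⟩
    have hRinv_le : ∀ h, h ∈ N → ∀ x, R (h * x) ≤ R x := by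
      intro h hh x
      apply Finset.sup_le
      intro n hn
      have h1 : (cayley S).dist (h * x) n = (cayley S).dist x (h⁻¹ * n) := by
        conv_lhs => rw [show n = h * (h⁻¹ * n) by group]
        exact cayley_dist_smul h x (h⁻¹ * n)
      rw [h1]
      exact hR_le x _ (N.mul_mem (N.inv_mem hh) (hmemT.mp hn))
    have hRinv : ∀ h, h ∈ N → ∀ x, R (h * x) = R x := by
      intro h hh x
      refine le_antisymm (hRinv_le h hh x) ?_
      have := hRinv_le h⁻¹ (N.inv_mem hh) (h * x)
      simpa [← mul_assoc] using this
    have key : ∀ h, h ∈ N → (cayley S).dist x₀ (h * x₀) ≤ 4 * δ + 2 := by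
      intro h hh
      set y := h * x₀ with hy
      set d := (cayley S).dist x₀ y with hd
      obtain ⟨r, hr⟩ := hconn.exists_walk_length_eq_dist x₀ y
      set i := d / 2 with hi
      set m := r.getVert i with hm
      have hile : i ≤ d := Nat.div_le_self _ _
      have hm_sup : m ∈ r.support :=
        Walk.mem_support_iff_exists_getVert.mpr ⟨i, rfl, by omega⟩
      have h1 : (cayley S).dist x₀ m ≤ i := dist_getVert_left r i
      have h2 : (cayley S).dist m y ≤ d - i := by
        have := dist_getVert_right r i
        rwa [hr] at this
      have h3 : d ≤ (cayley S).dist x₀ m + (cayley S).dist m y := hconn.dist_triangle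
      have h4 : (cayley S).dist x₀ m = i := by omega
      have h5 : (cayley S).dist m y = d - i := by omega
      obtain ⟨n, hnN, hn⟩ := hR_ex m
      have hkm : R x₀ ≤ R m := hmin m
      obtain ⟨p, hp⟩ := hconn.exists_walk_length_eq_dist x₀ n
      obtain ⟨q, hq⟩ := hconn.exists_walk_length_eq_dist n y
      obtain ⟨w, hw, hdw⟩ := hslim x₀ n y p q r hp hq hr m hm_sup
      have hRy : R y = R x₀ := hRinv h hh x₀
      have hxn : (cayley S).dist x₀ n ≤ R x₀ := hR_le x₀ n hnN
      have hyn : (cayley S).dist y n ≤ R x₀ := by rw [← hRy]; exact hR_le y n hnN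
      have hRmn : R x₀ ≤ (cayley S).dist m n := by rw [← hn]; exact hkm
      have hcase : i ≤ 2 * δ ∨ d - i ≤ 2 * δ := by
        rcases hw with hwp | hwq
        · left
          have hsub : (cayley S).dist x₀ w + (cayley S).dist w n ≤ (cayley S).dist x₀ n := by
            have := dist_add_dist_of_mem_support p hwp
            rwa [hp] at this
          have t1 : (cayley S).dist x₀ m ≤ (cayley S).dist x₀ w + (cayley S).dist w m :=
            hconn.dist_triangle
          have t2 : (cayley S).dist m n ≤ (cayley S).dist m w + (cayley S).dist w n :=
            hconn.dist_triangle
          have hmw : (cayley S).dist m w ≤ δ := hdw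
          have hwm : (cayley S).dist w m ≤ δ := by
            rw [SimpleGraph.dist_comm]; exact hdw
          omega
        · right
          have hsub : (cayley S).dist n w + (cayley S).dist w y ≤ (cayley S).dist n y := by
            have := dist_add_dist_of_mem_support q hwq
            rwa [hq] at this
          have t1 : (cayley S).dist m y ≤ (cayley S).dist m w + (cayley S).dist w y :=
            hconn.dist_triangle
          have t2 : (cayley S).dist m n ≤ (cayley S).dist m w + (cayley S).dist w n :=
            hconn.dist_triangle
          have hmw : (cayley S).dist m w ≤ δ := hdw
          have hwn : (cayley S).dist w n = (cayley S).dist n w := SimpleGraph.dist_comm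
          have hny : (cayley S).dist n y = (cayley S).dist y n := SimpleGraph.dist_comm
          omega
      rcases hcase with hc | hc <;> omega
    have hg' : x₀ * g * x₀⁻¹ ∈ N := hNorm.conj_mem g hg x₀
    have hkey := key _ hg'
    have heq : x₀ * g * x₀⁻¹ * x₀ = x₀ * g := by group
    rw [heq] at hkey
    calc (cayley S).dist 1 g = (cayley S).dist (x₀ * 1) (x₀ * g) :=
          (cayley_dist_smul x₀ 1 g).symm
      _ = (cayley S).dist x₀ (x₀ * g) := by rw [mul_one]
      _ ≤ 4 * δ + 2 := hkey
  refine ⟨hpart1, ?_⟩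
  have hfin : {g : G | ∃ N : Subgroup G, N.Normal ∧ Finite ↥N ∧ g ∈ N}.Finite := by
    refine Set.Finite.subset (ball_finite hSfin (4 * δ + 2)) ?_
    rintro g ⟨N, hN1, hN2, hgN⟩
    obtain ⟨p, hp⟩ := hconn.exists_walk_length_eq_dist g 1
    exact ⟨p, by rw [hp, SimpleGraph.dist_comm]; exact hpart1 N hN1 hN2 g hgN⟩
  have hsupfin : ∀ (N₁ N₂ : Subgroup G), N₁.Normal → N₂.Normal → Finite ↥N₁ → Finite ↥N₂ →
      (N₁ ⊔ N₂).Normal ∧ Finite ↥(N₁ ⊔ N₂) := by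
    intro N₁ N₂ h1 h2 f1 f2
    haveI := h1; haveI := h2; haveI := f1; haveI := f2
    refine ⟨Subgroup.sup_normal N₁ N₂, ?_⟩
    have hfs : ((N₁ ⊔ N₂ : Subgroup G) : Set G).Finite := by
      rw [Subgroup.mul_normal N₁ N₂]
      exact Set.Finite.mul (Set.toFinite _) (Set.toFinite _)
    exact hfs.to_subtype
  refine ⟨{ carrier := {g : G | ∃ N : Subgroup G, N.Normal ∧ Finite ↥N ∧ g ∈ N},
            one_mem' := ⟨⊥, inferInstance, inferInstance, Subgroup.one_mem ⊥⟩,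
            mul_mem' := ?_, inv_mem' := ?_ }, ?_, ?_, ?_⟩
  · intro a b ha hb
    obtain ⟨N₁, h11, h12, haN⟩ := ha
    obtain ⟨N₂, h21, h22, hbN⟩ := hb
    obtain ⟨hn, hf⟩ := hsupfin N₁ N₂ h11 h21 h12 h22
    exact ⟨N₁ ⊔ N₂, hn, hf,
      (N₁ ⊔ N₂).mul_mem (Subgroup.mem_sup_left haN) (Subgroup.mem_sup_right hbN)⟩
  · intro a ha
    obtain ⟨N, h1, h2, haN⟩ := ha
    exact ⟨N, h1, h2, N.inv_mem haN⟩
  · exact ⟨fun {a} ha gg => by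
      obtain ⟨N, h1, h2, haN⟩ := ha
      exact ⟨N, h1, h2, h1.conj_mem a haN gg⟩⟩
  · exact hfin.to_subtype
  · intro N h1 h2 g hgN
    exact ⟨N, h1, h2, hgN⟩
end

section
/- Let G be a group acting on a tree T with virtually cyclic edge stabilizers, and let e be an edge of T such that the maximal virtually cyclic subgroup Ĝ_e of G containing the stabilizer G_e is contained in the stabilizer of the origin vertex o(e). Let T' be the quotient of T by the G-equivariant equivalence relation generated by e ∼ g·e for g ∈ Ĝ_e. Then T' is a G-tree, the stabilizer of the image of e in T' contains Ĝ_e, and the natural map T → T' is G-equivariant and surjective. -/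
universe u

/-- The stabilizer of a vertex under the action `ρ`. -/
def pointStab {G V : Type*} [Group G] (ρ : G →* Equiv.Perm V) (v : V) : Subgroup G :=
  Subgroup.comap ρ (MulAction.stabilizer (Equiv.Perm V) v)

/-- The (pointwise) stabilizer of an edge under the action `ρ`. -/
def edgeStab {G V : Type*} [Group G] (ρ : G →* Equiv.Perm V) (u v : V) : Subgroup G :=
  pointStab ρ u ⊓ pointStab ρ v

namespace ZmaxFold

variable {V : Type u} {T : SimpleGraph V}

/-- The unique path from `r` to `x` in the tree `T`. -/
noncomputable def pwalk (hT : T.IsTree) (r x : V) : T.Walk r x :=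
  (hT.existsUnique_path r x).exists.choose

lemma pwalk_isPath (hT : T.IsTree) (r x : V) : (pwalk hT r x).IsPath :=
  (hT.existsUnique_path r x).exists.choose_spec

lemma eq_pwalk (hT : T.IsTree) {r x : V} (p : T.Walk r x) (hp : p.IsPath) :
    p = pwalk hT r x :=
  ((hT.existsUnique_path r x).unique hp (pwalk_isPath hT r x))

/-- Distance to the root `r`. -/
noncomputable def dd (hT : T.IsTree) (r x : V) : ℕ := (pwalk hT r x).length

/-- Parent of `x` (the penultimate vertex on the path from `r`). -/
noncomputable def par (hT : T.IsTree) (r x : V) : V :=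
  (pwalk hT r x).getVert (dd hT r x - 1)

lemma dd_root (hT : T.IsTree) (r : V) : dd hT r r = 0 := by
  have h := eq_pwalk hT (SimpleGraph.Walk.nil : T.Walk r r) SimpleGraph.Walk.IsPath.nil
  simp [dd, ← h]

lemma root_of_dd_eq_zero (hT : T.IsTree) {r x : V} (h : dd hT r x = 0) : r = x :=
  SimpleGraph.Walk.eq_of_length_eq_zero h

/-- The fundamental local lemma: an edge of the tree goes between consecutive levels,
and identifies the parent of the deeper endpoint. -/
lemma F1 (hT : T.IsTree) (r : V) {x y : V} (hxy : T.Adj x y) :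
    (dd hT r y = dd hT r x + 1 ∧ par hT r y = x) ∨
    (dd hT r x = dd hT r y + 1 ∧ par hT r x = y) := by
  classical
  by_cases hy : y ∈ (pwalk hT r x).support
  · right
    -- the path to x passes through y, and the remainder must be the single edge y-x
    have hq : (pwalk hT r x).takeUntil y hy = pwalk hT r y :=
      eq_pwalk hT _ ((pwalk_isPath hT r x).takeUntil hy)
    have hd : ((pwalk hT r x).dropUntil y hy) = SimpleGraph.Walk.cons hxy.symm SimpleGraph.Walk.nil := by
      have h1 : ((pwalk hT r x).dropUntil y hy).IsPath := (pwalk_isPath hT r x).dropUntil hy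
      have h2 : (SimpleGraph.Walk.cons hxy.symm SimpleGraph.Walk.nil : T.Walk y x).IsPath := by
        simp [SimpleGraph.Walk.cons_isPath_iff, hxy.ne']
      exact congrArg Subtype.val (hT.IsAcyclic.path_unique ⟨_, h1⟩ ⟨_, h2⟩)
    have hspec := (pwalk hT r x).take_spec hy
    have hlen : dd hT r x = dd hT r y + 1 := by
      have := congrArg SimpleGraph.Walk.length hspec
      rw [SimpleGraph.Walk.length_append, hq, hd] at this
      simp [dd] at this ⊢
      omega
    refine ⟨hlen, ?_⟩
    have hpar : par hT r x = (pwalk hT r x).getVert (dd hT r y) := by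
      rw [par, hlen, Nat.add_sub_cancel]
    rw [hpar, ← hspec, SimpleGraph.Walk.getVert_append]
    have hlq : ((pwalk hT r x).takeUntil y hy).length = dd hT r y := by rw [hq]; rfl
    rw [hlq]
    simp
  · left
    have hpath : ((pwalk hT r x).concat hxy).IsPath := by
      rw [SimpleGraph.Walk.concat_eq_append]
      rw [SimpleGraph.Walk.isPath_def, SimpleGraph.Walk.support_append]
      simp only [SimpleGraph.Walk.support_cons, SimpleGraph.Walk.support_nil, List.tail_cons]
      rw [List.nodup_append]
      refine ⟨(pwalk_isPath hT r x).support_nodup, List.nodup_singleton _, ?_⟩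
      intro a ha b hb
      simp only [List.mem_singleton] at hb
      subst hb
      rintro rfl
      exact hy ha
    have hPy : (pwalk hT r x).concat hxy = pwalk hT r y := eq_pwalk hT _ hpath
    have hlen : dd hT r y = dd hT r x + 1 := by
      rw [dd, ← hPy, SimpleGraph.Walk.length_concat]; rfl
    refine ⟨hlen, ?_⟩
    have hpar : par hT r y = (pwalk hT r y).getVert (dd hT r x) := by
      rw [par, hlen, Nat.add_sub_cancel]
    rw [hpar, ← hPy, SimpleGraph.Walk.concat_eq_append, SimpleGraph.Walk.getVert_append]
    simp [dd]

lemma par_mem_support (hT : T.IsTree) (r x : V) :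
    par hT r x ∈ (pwalk hT r x).support := by
  classical
  rw [SimpleGraph.Walk.mem_support_iff_exists_getVert]
  exact ⟨dd hT r x - 1, rfl, Nat.sub_le _ _⟩

lemma dd_par_le (hT : T.IsTree) (r x : V) : dd hT r (par hT r x) ≤ dd hT r x := by
  classical
  have hmem := par_mem_support hT r x
  have hq : (pwalk hT r x).takeUntil _ hmem = pwalk hT r (par hT r x) :=
    eq_pwalk hT _ ((pwalk_isPath hT r x).takeUntil hmem)
  have := SimpleGraph.Walk.length_takeUntil_le (pwalk hT r x) hmem
  rw [hq] at this
  exact this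

/-- F2 : parent is adjacent and one level up. -/
lemma F2 (hT : T.IsTree) (r : V) {x : V} (hx : dd hT r x ≠ 0) :
    T.Adj (par hT r x) x ∧ dd hT r (par hT r x) + 1 = dd hT r x := by
  have hadj : T.Adj (par hT r x) x := by
    have h1 : dd hT r x - 1 < (pwalk hT r x).length := by
      have : (pwalk hT r x).length = dd hT r x := rfl
      omega
    have := (pwalk hT r x).adj_getVert_succ h1
    have h2 : dd hT r x - 1 + 1 = dd hT r x := by omega
    rw [h2] at this
    have h4 : dd hT r x = (pwalk hT r x).length := rfl
    rw [h4, SimpleGraph.Walk.getVert_length] at this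
    exact this
  refine ⟨hadj, ?_⟩
  rcases F1 hT r hadj with ⟨h, _⟩ | ⟨h, _⟩
  · omega
  · have := dd_par_le hT r x
    omega

lemma dd_iterate (hT : T.IsTree) (r x : V) :
    ∀ k, k ≤ dd hT r x → dd hT r ((par hT r)^[k] x) + k = dd hT r x := by
  intro k
  induction k generalizing x with
  | zero => simp
  | succ n ih =>
    intro hk
    rw [Function.iterate_succ_apply]
    have hx : dd hT r x ≠ 0 := by omega
    obtain ⟨-, h2⟩ := F2 hT r hx
    have := ih (x := par hT r x) (by omega)
    omega

section Rel

variable (hT : T.IsTree) (r : V) (Rel : V → V → Prop)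
  (hRel : ∀ x y, Rel x y → ∃ m, T.Adj x m ∧ T.Adj m y)

include hRel in
/-- Classification of generating pairs: same level with the same parent,
or one is a grandchild of the other. -/
lemma G1 {x y : V} (hxy : Rel x y) :
    x = y ∨ (dd hT r x = dd hT r y ∧ par hT r x = par hT r y) ∨
    (dd hT r y = dd hT r x + 2 ∧ par hT r (par hT r y) = x) ∨
    (dd hT r x = dd hT r y + 2 ∧ par hT r (par hT r x) = y) := by
  obtain ⟨m, hxm, hmy⟩ := hRel x y hxy
  rcases F1 hT r hxm with ⟨h1, h1'⟩ | ⟨h1, h1'⟩ <;>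
    rcases F1 hT r hmy.symm with ⟨h2, h2'⟩ | ⟨h2, h2'⟩
  · -- m above both: x = y
    left
    exact h1'.symm.trans h2'
  · -- m above x, y child of m : grandchild
    right; right; left
    exact ⟨by omega, by rw [h2', h1']⟩
  · -- x child of m, m above y
    right; right; right
    exact ⟨by omega, by rw [h1', h2']⟩
  · -- x and y children of m: same parent
    right; left
    exact ⟨by omega, by rw [h1', h2']⟩

include hRel in
/-- Parity invariance along the equivalence. -/
lemma M1 {x y : V} (h : Relation.EqvGen Rel x y) :
    dd hT r x % 2 = dd hT r y % 2 := by
  induction h with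
  | rel a b hab =>
    rcases G1 hT r Rel hRel hab with rfl | ⟨h1, -⟩ | ⟨h1, -⟩ | ⟨h1, -⟩ <;> omega
  | refl => rfl
  | symm a b _ ih => omega
  | trans a b c _ _ ih1 ih2 => omega

include hRel in
/-- Strict equality of deep ancestors along the equivalence. -/
lemma M3 {x y : V} (h : Relation.EqvGen Rel x y) :
    ∀ t, (∀ z, Relation.EqvGen Rel z x → t < dd hT r z) →
      (par hT r)^[dd hT r x - t] x = (par hT r)^[dd hT r y - t] y := by
  induction h with
  | rel a b hab =>
    intro t ht
    have hta : t < dd hT r a := ht a (Relation.EqvGen.refl a)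
    have htb : t < dd hT r b := ht b (Relation.EqvGen.symm _ _ (Relation.EqvGen.rel _ _ hab))
    rcases G1 hT r Rel hRel hab with rfl | ⟨h1, h1'⟩ | ⟨h1, h1'⟩ | ⟨h1, h1'⟩
    · rfl
    · obtain ⟨k, hk⟩ : ∃ k, dd hT r a - t = k + 1 := ⟨dd hT r a - t - 1, by omega⟩
      have hk' : dd hT r b - t = k + 1 := by omega
      rw [hk, hk', Function.iterate_succ_apply, Function.iterate_succ_apply, h1']
    · have hk : dd hT r b - t = (dd hT r a - t) + 1 + 1 := by omega
      rw [hk, Function.iterate_succ_apply, Function.iterate_succ_apply, h1']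
    · have hk : dd hT r a - t = (dd hT r b - t) + 1 + 1 := by omega
      rw [hk, Function.iterate_succ_apply, Function.iterate_succ_apply, h1']
  | refl a => intro t ht; rfl
  | symm a b hab ih =>
    intro t ht
    have ht' : ∀ z, Relation.EqvGen Rel z a → t < dd hT r z := fun z hz =>
      ht z (Relation.EqvGen.trans _ _ _ hz hab)
    exact (ih t ht').symm
  | trans a b c hab hbc ih1 ih2 =>
    intro t ht
    have htb : ∀ z, Relation.EqvGen Rel z b → t < dd hT r z := fun z hz =>
      ht z (Relation.EqvGen.trans _ _ _ hz (Relation.EqvGen.symm _ _ hab))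
    exact (ih1 t ht).trans (ih2 t htb)

include hRel in
/-- Equivalence of ancestors at admissible-parity levels. -/
lemma M2 {x y : V} (h : Relation.EqvGen Rel x y) :
    ∀ t, t % 2 = dd hT r x % 2 →
      Relation.EqvGen Rel ((par hT r)^[dd hT r x - t] x) ((par hT r)^[dd hT r y - t] y) := by
  induction h with
  | rel a b hab =>
    intro t htp
    rcases G1 hT r Rel hRel hab with rfl | ⟨h1, h1'⟩ | ⟨h1, h1'⟩ | ⟨h1, h1'⟩
    · exact Relation.EqvGen.refl _
    · rcases le_or_gt (dd hT r a) t with hle | hlt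
      · have e1 : dd hT r a - t = 0 := by omega
        have e2 : dd hT r b - t = 0 := by omega
        rw [e1, e2]
        exact Relation.EqvGen.rel _ _ hab
      · obtain ⟨k, hk⟩ : ∃ k, dd hT r a - t = k + 1 := ⟨dd hT r a - t - 1, by omega⟩
        have hk' : dd hT r b - t = k + 1 := by omega
        rw [hk, hk', Function.iterate_succ_apply, Function.iterate_succ_apply, h1']
        exact Relation.EqvGen.refl _
    · -- dd b = dd a + 2
      rcases le_or_gt t (dd hT r a) with hle | hlt
      · have hk : dd hT r b - t = (dd hT r a - t) + 1 + 1 := by omega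
        rw [hk, Function.iterate_succ_apply, Function.iterate_succ_apply, h1']
        exact Relation.EqvGen.refl _
      · have e1 : dd hT r a - t = 0 := by omega
        have e2 : dd hT r b - t = 0 := by omega
        rw [e1, e2]
        exact Relation.EqvGen.rel _ _ hab
    · rcases le_or_gt t (dd hT r b) with hle | hlt
      · have hk : dd hT r a - t = (dd hT r b - t) + 1 + 1 := by omega
        rw [hk, Function.iterate_succ_apply, Function.iterate_succ_apply, h1']
        exact Relation.EqvGen.refl _
      · have e1 : dd hT r a - t = 0 := by omega
        have e2 : dd hT r b - t = 0 := by omega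
        rw [e1, e2]
        exact Relation.EqvGen.rel _ _ hab
  | refl a => intro t _; exact Relation.EqvGen.refl _
  | symm a b hab ih =>
    intro t htp
    have hpar : dd hT r b % 2 = dd hT r a % 2 := (M1 hT r Rel hRel hab).symm
    exact Relation.EqvGen.symm _ _ (ih t (by omega))
  | trans a b c hab hbc ih1 ih2 =>
    intro t htp
    have hpar : dd hT r a % 2 = dd hT r b % 2 := M1 hT r Rel hRel hab
    exact Relation.EqvGen.trans _ _ _ (ih1 t htp) (ih2 t (by omega))

/-- Minimal level in the equivalence class. -/
noncomputable def ee (x : V) : ℕ :=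
  sInf {n | ∃ z, Relation.EqvGen Rel z x ∧ dd hT r z = n}

lemma ee_mem (x : V) : ∃ z, Relation.EqvGen Rel z x ∧ dd hT r z = ee hT r Rel x := by
  have hne : {n | ∃ z, Relation.EqvGen Rel z x ∧ dd hT r z = n}.Nonempty :=
    ⟨dd hT r x, x, Relation.EqvGen.refl x, rfl⟩
  exact Nat.sInf_mem hne

lemma ee_le (x : V) : ee hT r Rel x ≤ dd hT r x :=
  Nat.sInf_le ⟨x, Relation.EqvGen.refl x, rfl⟩

lemma ee_le_of_eqv {x z : V} (h : Relation.EqvGen Rel z x) : ee hT r Rel x ≤ dd hT r z :=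
  Nat.sInf_le ⟨z, h, rfl⟩

lemma ee_inv {x y : V} (h : Relation.EqvGen Rel x y) : ee hT r Rel x = ee hT r Rel y := by
  unfold ee
  congr 1
  ext n
  constructor
  · rintro ⟨z, hz, rfl⟩
    exact ⟨z, Relation.EqvGen.trans _ _ _ hz h, rfl⟩
  · rintro ⟨z, hz, rfl⟩
    exact ⟨z, Relation.EqvGen.trans _ _ _ hz (Relation.EqvGen.symm _ _ h), rfl⟩

include hRel in
lemma ee_parity (x : V) : ee hT r Rel x % 2 = dd hT r x % 2 := by
  obtain ⟨z, hz, hdz⟩ := ee_mem hT r Rel x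
  rw [← hdz]
  exact M1 hT r Rel hRel hz

include hRel in
/-- Claim B : every ancestor at an admissible level at least the class minimum is
equivalent to the vertex itself. -/
lemma claimB (x : V) (t : ℕ) (hpar : t % 2 = dd hT r x % 2) (hle : ee hT r Rel x ≤ t) :
    Relation.EqvGen Rel x ((par hT r)^[dd hT r x - t] x) := by
  obtain ⟨z, hz, hdz⟩ := ee_mem hT r Rel x
  have h2 := M2 hT r Rel hRel hz t (by have := M1 hT r Rel hRel hz; omega)
  have e1 : dd hT r z - t = 0 := by omega
  rw [e1] at h2
  simp only [Function.iterate_zero, id_eq] at h2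
  exact Relation.EqvGen.trans _ _ _ (Relation.EqvGen.symm _ _ hz) h2

include hRel in
/-- One-sided form of the key lemma: a lower-level neighbour is equivalent to
the ancestor of `x` at level `d - 1`. -/
lemma key_aux {x y : V} (hxy : T.Adj x y) (hlt : ee hT r Rel y < ee hT r Rel x) :
    Relation.EqvGen Rel y ((par hT r)^[dd hT r x - (ee hT r Rel x - 1)] x) := by
  set d := ee hT r Rel x with hd
  have hd1 : 1 ≤ d := by omega
  have hddx : d ≤ dd hT r x := ee_le hT r Rel x
  have hpx : d % 2 = dd hT r x % 2 := ee_parity hT r Rel hRel x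
  rcases F1 hT r hxy with ⟨h1, h1'⟩ | ⟨h1, h1'⟩
  · -- y one level deeper, par y = x
    have hpy : (d - 1) % 2 = dd hT r y % 2 := by omega
    have hley : ee hT r Rel y ≤ d - 1 := by omega
    have hB := claimB hT r Rel hRel y (d - 1) hpy hley
    have hk : dd hT r y - (d - 1) = (dd hT r x - (d - 1)) + 1 := by omega
    rw [hk, Function.iterate_succ_apply, h1'] at hB
    exact hB
  · -- x one level deeper, par x = y
    have hpy : (d - 1) % 2 = dd hT r y % 2 := by omega
    have hley : ee hT r Rel y ≤ d - 1 := by omega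
    have hB := claimB hT r Rel hRel y (d - 1) hpy hley
    have hk : dd hT r x - (d - 1) = (dd hT r y - (d - 1)) + 1 := by omega
    rw [hk, Function.iterate_succ_apply, h1']
    exact hB

include hRel in
/-- KEY lemma: two lower-level neighbours of an equivalence class are equivalent. -/
lemma key {x x' y y' : V} (hxx : Relation.EqvGen Rel x x') (hxy : T.Adj x y)
    (hxy' : T.Adj x' y') (h1 : ee hT r Rel y < ee hT r Rel x)
    (h2 : ee hT r Rel y' < ee hT r Rel x) : Relation.EqvGen Rel y y' := by
  have hee : ee hT r Rel x = ee hT r Rel x' := ee_inv hT r Rel hxx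
  have ha := key_aux hT r Rel hRel hxy h1
  have hb := key_aux hT r Rel hRel hxy' (by omega)
  have heq : (par hT r)^[dd hT r x - (ee hT r Rel x - 1)] x =
      (par hT r)^[dd hT r x' - (ee hT r Rel x' - 1)] x' := by
    rw [← hee]
    refine M3 hT r Rel hRel hxx (ee hT r Rel x - 1) ?_
    intro z hz
    have hz1 : ee hT r Rel x ≤ dd hT r z := (ee_inv hT r Rel hz) ▸ ee_le hT r Rel z
    omega
  rw [heq, ← hee] at ha
  rw [← hee] at hb
  exact Relation.EqvGen.trans _ _ _ ha (Relation.EqvGen.symm _ _ hb)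

end Rel

/-- Generic acyclicity criterion: a level function under which adjacent vertices
have distinct levels and lower-level neighbours are unique forces acyclicity. -/
lemma acyclic_of_level {W : Type*} (Q : SimpleGraph W) (L : W → ℕ)
    (h1 : ∀ a b, Q.Adj a b → L a ≠ L b)
    (h2 : ∀ a b c, Q.Adj a b → Q.Adj a c → L b < L a → L c < L a → b = c) :
    Q.IsAcyclic := by
  classical
  intro v c hc
  -- find a vertex of maximal level on the cycle
  have hne : c.support ≠ [] := by
    have := c.start_mem_support
    intro h; rw [h] at this; exact (List.not_mem_nil this)
  obtain ⟨C, hCmem⟩ : ∃ C, C ∈ c.support.argmax L := by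
    rcases Option.eq_none_or_eq_some (c.support.argmax L) with h | ⟨C, hC⟩
    · exact absurd (List.argmax_eq_none.mp h) hne
    · exact ⟨C, hC⟩
  have hCsup : C ∈ c.support := List.argmax_mem hCmem
  have hmax : ∀ D ∈ c.support, L D ≤ L C := fun D hD => List.le_of_mem_argmax hD hCmem
  set c' := c.rotate C hCsup with hc'def
  have hc' : c'.IsCycle := hc.rotate hCsup
  have hsup' : ∀ D ∈ c'.support, L D ≤ L C := by
    intro D hD
    rw [SimpleGraph.Walk.mem_support_iff] at hD
    rcases hD with rfl | hD
    · exact le_rfl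
    · have hrot := SimpleGraph.Walk.support_rotate c C hCsup
      have : D ∈ c.support.tail := hrot.mem_iff.mp hD
      exact hmax D (c.support_eq_cons ▸ List.mem_cons_of_mem _ this)
  clear_value c'
  clear hc'def hc hCsup hmax hne
  have h3 := hc'.three_le_length
  cases c' with
  | nil => exact hc'.ne_nil rfl
  | @cons _ B1 _ hadj p =>
    rw [SimpleGraph.Walk.cons_isCycle_iff] at hc'
    obtain ⟨hp, hedge⟩ := hc'
    -- look at the final edge of p via its reverse
    cases hrev : p.reverse with
    | nil =>
      exact hadj.ne rfl
    | @cons _ Bk _ hadj2 q =>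
      -- hadj2 : Q.Adj C Bk, q : Walk Bk B1
      have hrevp : (SimpleGraph.Walk.cons hadj2 q).IsPath := hrev ▸ hp.reverse
      rw [SimpleGraph.Walk.cons_isPath_iff] at hrevp
      obtain ⟨hq, hCq⟩ := hrevp
      have hBne : B1 ≠ Bk := by
        rintro rfl
        cases q with
        | nil =>
          -- p has length 1 : cycle of length 2, contradiction with 3 ≤ length
          have hl : p.length = 1 := by
            have := congrArg SimpleGraph.Walk.length hrev
            rw [SimpleGraph.Walk.length_reverse] at this
            simpa using this
          simp only [SimpleGraph.Walk.length_cons, hl] at h3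
          omega
        | cons hadj3 q2 =>
          rw [SimpleGraph.Walk.cons_isPath_iff] at hq
          exact hq.2 q2.end_mem_support
      -- levels
      have hB1mem : B1 ∈ (SimpleGraph.Walk.cons hadj p).support := by
        rw [SimpleGraph.Walk.support_cons]
        exact List.mem_cons_of_mem _ p.start_mem_support
      have hBkmem : Bk ∈ (SimpleGraph.Walk.cons hadj p).support := by
        rw [SimpleGraph.Walk.support_cons]
        refine List.mem_cons_of_mem _ ?_
        have : Bk ∈ p.reverse.support := by
          rw [hrev, SimpleGraph.Walk.support_cons]
          exact List.mem_cons_of_mem _ q.start_mem_support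
        rwa [SimpleGraph.Walk.support_reverse, List.mem_reverse] at this
      have hL1 : L B1 < L C :=
        lt_of_le_of_ne (hsup' B1 hB1mem) (fun h => h1 C B1 hadj h.symm)
      have hLk : L Bk < L C :=
        lt_of_le_of_ne (hsup' Bk hBkmem) (fun h => h1 C Bk hadj2 h.symm)
      exact hBne (h2 C B1 Bk hadj hadj2 hL1 hLk)

section Main

variable {G : Type*} [Group G] (ρ : G →* Equiv.Perm V) (vv : V) (Ghat : Subgroup G)

/-- The generating relation of the fold. -/
def Rc : V → V → Prop := fun x y => ∃ h : G, ∃ g ∈ Ghat, x = ρ h vv ∧ y = ρ h (ρ g vv)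

/-- The equivalence generated by the fold relation. -/
def sd : Setoid V := Relation.EqvGen.setoid (Rc ρ vv Ghat)

lemma Rc_invariant (k : G) {x y : V} (h : Rc ρ vv Ghat x y) :
    Rc ρ vv Ghat (ρ k x) (ρ k y) := by
  obtain ⟨h0, g, hg, rfl, rfl⟩ := h
  exact ⟨k * h0, g, hg, by rw [map_mul]; rfl, by rw [map_mul]; rfl⟩

lemma eqv_invariant (k : G) {x y : V} (h : Relation.EqvGen (Rc ρ vv Ghat) x y) :
    Relation.EqvGen (Rc ρ vv Ghat) (ρ k x) (ρ k y) := by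
  induction h with
  | rel a b hab => exact Relation.EqvGen.rel _ _ (Rc_invariant ρ vv Ghat k hab)
  | refl a => exact Relation.EqvGen.refl _
  | symm a b _ ih => exact Relation.EqvGen.symm _ _ ih
  | trans a b c _ _ ih1 ih2 => exact Relation.EqvGen.trans _ _ _ ih1 ih2

/-- The induced permutation action on the quotient. -/
def rho' : G →* Equiv.Perm (Quotient (sd ρ vv Ghat)) where
  toFun k :=
    { toFun := Quotient.map (ρ k) (fun x y h => eqv_invariant ρ vv Ghat k h)
      invFun := Quotient.map (ρ k⁻¹) (fun x y h => eqv_invariant ρ vv Ghat k⁻¹ h)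
      left_inv := by
        intro a
        induction a using Quotient.ind with
        | _ x =>
          change Quotient.mk _ (ρ k⁻¹ (ρ k x)) = Quotient.mk _ x
          congr 1
          rw [map_inv]
          exact Equiv.symm_apply_apply _ _
      right_inv := by
        intro a
        induction a using Quotient.ind with
        | _ x =>
          change Quotient.mk _ (ρ k (ρ k⁻¹ x)) = Quotient.mk _ x
          congr 1
          rw [map_inv]
          exact Equiv.apply_symm_apply _ _ }
  map_one' := by
    ext a
    induction a using Quotient.ind with
    | _ x => simp [Quotient.map_mk]
  map_mul' k l := by
    ext a
    induction a using Quotient.ind with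
    | _ x => simp [Quotient.map_mk]; rfl

/-- The quotient graph. -/
def Qg (T : SimpleGraph V) : SimpleGraph (Quotient (sd ρ vv Ghat)) where
  Adj a b := a ≠ b ∧ ∃ x y : V, Quotient.mk _ x = a ∧ Quotient.mk _ y = b ∧ T.Adj x y
  symm := by
    constructor
    rintro a b ⟨hne, x, y, hx, hy, hxy⟩
    exact ⟨hne.symm, y, x, hy, hx, hxy.symm⟩
  loopless := by constructor; rintro a ⟨hne, -⟩; exact hne rfl

end Main

end ZmaxFold

/-- The `Z_max` fold: let `e = (u,v)` be an edge of a `G`-tree with virtually cyclic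
edge stabilizers, and suppose the maximal virtually cyclic subgroup `Ĝ` containing
the stabilizer of `e` fixes the origin `u`. Quotienting `T` by the `G`-equivariant
equivalence relation generated by `e ∼ g·e` (`g ∈ Ĝ`) yields a `G`-tree `T'`, the
quotient map is `G`-equivariant and surjective, and the stabilizer of the image
edge contains `Ĝ`. -/
theorem zmax_fold_exists
    {G : Type*} {V : Type u} [Group G] (T : SimpleGraph V) (hT : T.IsTree)
    (ρ : G →* Equiv.Perm V)
    (hadj : ∀ (g : G) (x y : V), T.Adj (ρ g x) (ρ g y) ↔ T.Adj x y)
    (hvc : ∀ x y : V, T.Adj x y → IsVirtuallyCyclic ↥(edgeStab ρ x y))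
    (u v : V) (he : T.Adj u v)
    (Ghat : Subgroup G) (hGhatvc : IsVirtuallyCyclic ↥Ghat)
    (hGhatmax : ∀ M : Subgroup G, IsVirtuallyCyclic ↥M → Ghat ≤ M → M = Ghat)
    (hcontain : edgeStab ρ u v ≤ Ghat)
    (horigin : Ghat ≤ pointStab ρ u) :
    ∃ (V' : Type u) (T' : SimpleGraph V') (ρ' : G →* Equiv.Perm V') (π : V → V'),
      T'.IsTree ∧
      (∀ (g : G) (x y : V'), T'.Adj (ρ' g x) (ρ' g y) ↔ T'.Adj x y) ∧
      Function.Surjective π ∧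
      (∀ (g : G) (x : V), π (ρ g x) = ρ' g (π x)) ∧
      T'.Adj (π u) (π v) ∧
      Ghat ≤ edgeStab ρ' (π u) (π v) ∧
      (∀ x y : V, π x = π y ↔
        Relation.EqvGen (fun x y : V => ∃ h : G, ∃ g ∈ Ghat, x = ρ h v ∧ y = ρ h (ρ g v)) x y) := by
  classical
  -- point stabilizer facts
  have hfixu : ∀ g ∈ Ghat, ρ g u = u := by
    intro g hg
    have := horigin hg
    rw [pointStab, Subgroup.mem_comap, MulAction.mem_stabilizer_iff] at this
    exact this
  -- every generating pair has a common neighbour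
  have hRel : ∀ x y : V, ZmaxFold.Rc ρ v Ghat x y → ∃ m, T.Adj x m ∧ T.Adj m y := by
    rintro x y ⟨h, g, hg, rfl, rfl⟩
    refine ⟨ρ h u, (hadj h v u).mpr he.symm, ?_⟩
    have h2 : T.Adj (ρ h (ρ g u)) (ρ h (ρ g v)) := (hadj h _ _).mpr ((hadj g u v).mpr he)
    rwa [hfixu g hg] at h2
  -- notation
  set Rel := ZmaxFold.Rc ρ v Ghat with hReldef
  set s := ZmaxFold.sd ρ v Ghat with hsdef
  refine ⟨Quotient s, ZmaxFold.Qg ρ v Ghat T, ZmaxFold.rho' ρ v Ghat, fun x => Quotient.mk s x,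
    ?_, ?_, ?_, ?_, ?_, ?_, ?_⟩
  · -- the quotient is a tree
    constructor
    · -- connected
      have hstep : ∀ x y : V, T.Adj x y →
          (ZmaxFold.Qg ρ v Ghat T).Reachable (Quotient.mk s x) (Quotient.mk s y) := by
        intro x y hxy
        by_cases hq : (Quotient.mk s x : Quotient s) = Quotient.mk s y
        · rw [hq]
        · exact SimpleGraph.Adj.reachable ⟨hq, x, y, rfl, rfl, hxy⟩
      have hwalk : ∀ (x y : V), T.Walk x y →
          (ZmaxFold.Qg ρ v Ghat T).Reachable (Quotient.mk s x) (Quotient.mk s y) := by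
        intro x y p
        induction p with
        | nil => exact SimpleGraph.Reachable.refl _
        | cons h q ih => exact (hstep _ _ h).trans ih
      have : Nonempty (Quotient s) := ⟨Quotient.mk s u⟩
      constructor
      intro a b
      induction a using Quotient.ind with
      | _ x =>
        induction b using Quotient.ind with
        | _ y => exact hwalk x y (hT.isConnected.preconnected x y).some
    · -- acyclic
      refine ZmaxFold.acyclic_of_level _ (Quotient.lift (ZmaxFold.ee hT u Rel) ?_) ?_ ?_
      · intro a b hab
        exact ZmaxFold.ee_inv hT u Rel hab
      · rintro a b ⟨hne, x, y, hx, hy, hxy⟩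
        subst hx; subst hy
        change ZmaxFold.ee hT u Rel x ≠ ZmaxFold.ee hT u Rel y
        have p1 := ZmaxFold.ee_parity hT u Rel hRel x
        have p2 := ZmaxFold.ee_parity hT u Rel hRel y
        rcases ZmaxFold.F1 hT u hxy with ⟨h1, -⟩ | ⟨h1, -⟩ <;> omega
      · rintro a b c ⟨hne1, x, y, hx, hy, hxy⟩ ⟨hne2, x', y', hx', hy', hxy'⟩ hb hc
        subst hx; subst hy; subst hy'
        have hxx' : Relation.EqvGen Rel x x' := Quotient.exact hx'.symm
        change ZmaxFold.ee hT u Rel y < ZmaxFold.ee hT u Rel x at hb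
        change ZmaxFold.ee hT u Rel y' < ZmaxFold.ee hT u Rel x at hc
        exact Quotient.sound (ZmaxFold.key hT u Rel hRel hxx' hxy hxy' hb hc)
  · -- equivariant adjacency
    have haux : ∀ (g : G) (a b : Quotient s), (ZmaxFold.Qg ρ v Ghat T).Adj a b →
        (ZmaxFold.Qg ρ v Ghat T).Adj (ZmaxFold.rho' ρ v Ghat g a) (ZmaxFold.rho' ρ v Ghat g b) := by
      rintro g a b ⟨hne, x, y, hx, hy, hxy⟩
      subst hx; subst hy
      refine ⟨fun hcon => hne ?_, ρ g x, ρ g y, rfl, rfl, (hadj g x y).mpr hxy⟩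
      exact (ZmaxFold.rho' ρ v Ghat g).injective hcon
    intro g a b
    constructor
    · intro h
      have := haux g⁻¹ _ _ h
      rwa [← Equiv.Perm.mul_apply, ← Equiv.Perm.mul_apply, ← map_mul, inv_mul_cancel,
        map_one, Equiv.Perm.one_apply, Equiv.Perm.one_apply] at this
    · exact haux g a b
  · -- surjective
    exact Quotient.exists_rep
  · -- equivariance of the projection
    intro g x
    rfl
  · -- the image edge
    refine ⟨?_, u, v, rfl, rfl, he⟩
    intro hq
    have heqv : Relation.EqvGen Rel u v := Quotient.exact hq
    have hpar := ZmaxFold.M1 hT u Rel hRel heqv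
    have h0 : ZmaxFold.dd hT u u = 0 := ZmaxFold.dd_root hT u
    rcases ZmaxFold.F1 hT u he with ⟨h1, -⟩ | ⟨h1, -⟩ <;> omega
  · -- Ghat stabilizes the image edge
    intro g hg
    rw [edgeStab, Subgroup.mem_inf]
    constructor <;>
      rw [pointStab, Subgroup.mem_comap, MulAction.mem_stabilizer_iff, Equiv.Perm.smul_def]
    · have hmk : (ZmaxFold.rho' ρ v Ghat g) (Quotient.mk s u) = Quotient.mk s (ρ g u) := rfl
      rw [hmk, hfixu g hg]
    · have hmk : (ZmaxFold.rho' ρ v Ghat g) (Quotient.mk s v) = Quotient.mk s (ρ g v) := rfl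
      rw [hmk]
      refine Quotient.sound (Relation.EqvGen.symm _ _ (Relation.EqvGen.rel _ _ ?_))
      exact ⟨1, g, hg, by simp, by simp⟩
  · -- description of the fibres
    intro x y
    constructor
    · exact fun h => Quotient.exact h
    · exact fun h => Quotient.sound h
end
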